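/- arXiv:1407.1591 — 6 statements merged into one kernel-verified Lean document; each statement's English description precedes it below -/
import Mathlib

section
/- Let p_n, q_n be sequences in [0, 2/3] with p_n + q_n > 0 for all n. Then P(n, p_n, q_n) → 0 as n → ∞ if and only if n (p_n − q_n)^2 / (p_n + q_n) → ∞. -/
open Real Filter

/-- Probability that a Binomial(m, p) random variable equals `k`. -/
noncomputable def binomProb (m : ℕ) (p : ℝ) (k : ℕ) : ℝ :=
  (m.choose k : ℝ) * p ^ k * (1 - p) ^ (m - k)

/-- For independent `X ~ Binomial(m, p)` and `Y ~ Binomial(n, q)`,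
the probability `Pr(Y ≥ X - ℓ)`. -/
noncomputable def prGEshift (m : ℕ) (p : ℝ) (n : ℕ) (q : ℝ) (ℓ : ℝ) : ℝ :=
  ∑ j ∈ Finset.range (m + 1), ∑ k ∈ Finset.range (n + 1),
    if (j : ℝ) - ℓ ≤ (k : ℝ) then binomProb m p j * binomProb n q k else 0

/-- For independent `X ~ Binomial(m, p)` and `Y ~ Binomial(n, q)`,
the probability `Pr(Y ≥ X)`. -/
noncomputable def prGE (m : ℕ) (p : ℝ) (n : ℕ) (q : ℝ) : ℝ :=
  prGEshift m p n q 0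

/-- `P(m, n, p, q) = Pr(Y ≥ X)` for independent `X ~ Binomial(m, max p q)`
and `Y ~ Binomial(n, min p q)`. -/
noncomputable def Pmn (m n : ℕ) (p q : ℝ) : ℝ :=
  prGE m (max p q) n (min p q)

/-- `P(n, p, q) = P(n, n, p, q)`. -/
noncomputable def Pn (n : ℕ) (p q : ℝ) : ℝ :=
  Pmn n n p q

/-!
Write `P = max p q`, `Q = min p q`, `X ~ Bin(n, P)`, `Y ~ Bin(n, Q)`.

If `n (P - Q)² / (P + Q)` is large, Chebyshev's inequality for `X` and `Y` at the midpoint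
`n (P + Q) / 2` gives `Pr(Y ≥ X) ≤ 4 (P + Q) / (n (P - Q)²)`.

Conversely, suppose `n (P - Q)² ≤ K (P + Q)`. If `n (P + Q) ≤ 9 K` then already
`Pr(X = 0) = (1 - P)ⁿ ≥ e^{-27 K}`. Otherwise `Q ≥ (P + Q) / 3`, and we change the law of `Y`
from `Bin(n, Q)` to `Bin(n, P)`: the likelihood ratio at `k` is at least
`exp (-(P - Q) (k - n Q) / (Q (1 - Q)))`, which is bounded below in terms of `K` as long as
`k ≤ n P + 2 √(n (P + Q))`. For two independent copies `X, Y'` of `Bin(n, P)` we have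
`Pr(X ≤ Y') ≥ 1/2` by symmetry, and `Y'` exceeds `n P + 2 √(n (P + Q))` with probability at
most `1/4` by Chebyshev.
-/

open Finset

lemma binomProb_eq_eval (n : ℕ) (p : ℝ) (k : ℕ) :
    binomProb n p k = (bernsteinPolynomial ℝ n k).eval p := by
  simp [binomProb, bernsteinPolynomial]

lemma binomProb_nonneg (n : ℕ) {p : ℝ} (hp₀ : 0 ≤ p) (hp₁ : p ≤ 1) (k : ℕ) :
    0 ≤ binomProb n p k := by
  have : 0 ≤ 1 - p := sub_nonneg.2 hp₁
  unfold binomProb; positivity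

lemma sum_binomProb (n : ℕ) (p : ℝ) : ∑ k ∈ range (n + 1), binomProb n p k = 1 := by
  simpa [binomProb_eq_eval, Polynomial.eval_finsetSum] using
    congrArg (Polynomial.eval p) (bernsteinPolynomial.sum ℝ n)

lemma sum_sq_sub_mul_binomProb (n : ℕ) (p : ℝ) :
    ∑ k ∈ range (n + 1), ((k : ℝ) - n * p) ^ 2 * binomProb n p k = n * p * (1 - p) := by
  have h := congrArg (Polynomial.eval p) (bernsteinPolynomial.variance ℝ n)
  simp only [Polynomial.eval_finsetSum, Polynomial.eval_mul, Polynomial.eval_pow,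
    Polynomial.eval_sub, Polynomial.eval_natCast, Polynomial.eval_X,
    Polynomial.eval_one, nsmul_eq_mul, ← binomProb_eq_eval] at h
  rw [← h]
  exact sum_congr rfl fun k _ => by ring

lemma sum_filter_le_sum_mul_sq_div {ι : Type*} {s : Finset ι} {w f : ι → ℝ}
    (hw : ∀ i ∈ s, 0 ≤ w i) {t : ℝ} (ht : 0 < t) {A : ι → Prop} [DecidablePred A]
    (hA : ∀ i ∈ s, A i → t ≤ f i) :
    ∑ i ∈ s with A i, w i ≤ (∑ i ∈ s, w i * f i ^ 2) / t ^ 2 := by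
  rw [le_div_iff₀ (by positivity), sum_mul]
  calc ∑ i ∈ s with A i, w i * t ^ 2
      ≤ ∑ i ∈ s with A i, w i * f i ^ 2 := by
        refine sum_le_sum fun i hi => ?_
        obtain ⟨his, hAi⟩ := mem_filter.1 hi
        gcongr
        · exact hw i his
        · exact hA i his hAi
    _ ≤ ∑ i ∈ s, w i * f i ^ 2 :=
        sum_le_sum_of_subset_of_nonneg (filter_subset _ _)
          fun i hi _ => mul_nonneg (hw i hi) (sq_nonneg _)

lemma sum_binomProb_filter_le {n : ℕ} {p : ℝ} (hp₀ : 0 ≤ p) (hp₁ : p ≤ 1) {t : ℝ} (ht : 0 < t)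
    {A : ℕ → Prop} [DecidablePred A] (hA : ∀ k, A k → t ≤ |(k : ℝ) - n * p|) :
    ∑ k ∈ range (n + 1) with A k, binomProb n p k ≤ n * p * (1 - p) / t ^ 2 := by
  calc ∑ k ∈ range (n + 1) with A k, binomProb n p k
      ≤ (∑ k ∈ range (n + 1), binomProb n p k * |(k : ℝ) - n * p| ^ 2) / t ^ 2 :=
        sum_filter_le_sum_mul_sq_div (fun k _ => binomProb_nonneg n hp₀ hp₁ k) ht
          fun k _ => hA k
    _ = n * p * (1 - p) / t ^ 2 := by
        simp_rw [sq_abs, mul_comm (binomProb n p _), sum_sq_sub_mul_binomProb]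

lemma prGE_eq (m : ℕ) (p : ℝ) (n : ℕ) (q : ℝ) :
    prGE m p n q = ∑ j ∈ range (m + 1), ∑ k ∈ range (n + 1),
      if j ≤ k then binomProb m p j * binomProb n q k else 0 := by
  simp [prGE, prGEshift]

lemma prGE_le_add {m n : ℕ} {p q : ℝ} (hp₀ : 0 ≤ p) (hp₁ : p ≤ 1) (hq₀ : 0 ≤ q) (hq₁ : q ≤ 1)
    (c : ℝ) :
    prGE m p n q ≤ ∑ j ∈ (range (m + 1)).filter (fun j : ℕ => (j : ℝ) ≤ c), binomProb m p j
      + ∑ k ∈ (range (n + 1)).filter (fun k : ℕ => c ≤ (k : ℝ)), binomProb n q k := by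
  calc prGE m p n q
      ≤ ∑ j ∈ range (m + 1), ∑ k ∈ range (n + 1),
          ((if (j : ℝ) ≤ c then binomProb m p j else 0) * binomProb n q k
            + binomProb m p j * if c ≤ (k : ℝ) then binomProb n q k else 0) := by
        rw [prGE_eq]
        gcongr with j _ k _
        have hb := mul_nonneg (binomProb_nonneg m hp₀ hp₁ j) (binomProb_nonneg n hq₀ hq₁ k)
        split_ifs with h₁ h₂ h₃ h₃ <;> try linarith
        have := (Nat.cast_le (α := ℝ)).2 h₁
        linarith [not_le.1 h₂, not_le.1 h₃]
    _ = _ := by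
        simp only [sum_add_distrib, ← mul_sum, ← sum_mul, sum_binomProb, mul_one, one_mul,
          sum_filter]

lemma prGE_le_four_mul_div {n : ℕ} {P Q : ℝ} (hQ : 0 ≤ Q) (hQP : Q < P) (hP : P ≤ 1)
    (hn : 0 < n) :
    prGE n P n Q ≤ 4 * (P + Q) / (n * (P - Q) ^ 2) := by
  have hn' : (0 : ℝ) < n := Nat.cast_pos.2 hn
  have ht : 0 < n * (P - Q) / 2 := by have := sub_pos.2 hQP; positivity
  have hX := sum_binomProb_filter_le (n := n) (by linarith) hP ht
    (A := fun j : ℕ => (j : ℝ) ≤ n * (P + Q) / 2)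
    fun j _ => by rw [abs_sub_comm]; exact le_abs.2 (Or.inl (by linarith))
  have hY := sum_binomProb_filter_le (n := n) hQ (by linarith) ht
    (A := fun k : ℕ => n * (P + Q) / 2 ≤ (k : ℝ))
    fun k _ => le_abs.2 (Or.inl (by linarith))
  calc prGE n P n Q ≤ _ := prGE_le_add (by linarith) hP hQ (by linarith) (n * (P + Q) / 2)
    _ ≤ n * P * (1 - P) / (n * (P - Q) / 2) ^ 2 + n * Q * (1 - Q) / (n * (P - Q) / 2) ^ 2 :=
        add_le_add hX hY
    _ ≤ n * (P + Q) / (n * (P - Q) / 2) ^ 2 := by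
        rw [← add_div]
        gcongr
        nlinarith [mul_nonneg (mul_nonneg hn'.le hQ) hQ, mul_nonneg hn'.le (sq_nonneg P)]
    _ = 4 * (P + Q) / (n * (P - Q) ^ 2) := by field_simp; ring

lemma exp_neg_div_one_sub_le {x : ℝ} (hx : x < 1) : exp (-(x / (1 - x))) ≤ 1 - x := by
  have h : 0 < 1 - x := sub_pos.2 hx
  have hlog := one_sub_inv_le_log_of_pos h
  calc exp (-(x / (1 - x))) = exp (1 - (1 - x)⁻¹) := by congr 1; field_simp; ring
    _ ≤ exp (log (1 - x)) := exp_le_exp.2 hlog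
    _ = 1 - x := exp_log h

lemma exp_neg_three_mul_le {x : ℝ} (hx₀ : 0 ≤ x) (hx : x ≤ 2 / 3) : exp (-(3 * x)) ≤ 1 - x := by
  refine le_trans (exp_le_exp.2 ?_) (exp_neg_div_one_sub_le (by linarith))
  rw [neg_le_neg_iff, div_le_iff₀ (by linarith)]
  nlinarith

lemma one_sub_pow_le_prGE {m n : ℕ} {p q : ℝ} (hp₀ : 0 ≤ p) (hp₁ : p ≤ 1) (hq₀ : 0 ≤ q)
    (hq₁ : q ≤ 1) : (1 - p) ^ m ≤ prGE m p n q := by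
  rw [prGE_eq]
  calc (1 - p) ^ m
      = ∑ k ∈ range (n + 1), if 0 ≤ k then binomProb m p 0 * binomProb n q k else 0 := by
        have h0 : binomProb m p 0 = (1 - p) ^ m := by simp [binomProb]
        simp [← mul_sum, sum_binomProb, h0]
    _ ≤ _ := single_le_sum (f := fun j => ∑ k ∈ range (n + 1),
          if j ≤ k then binomProb m p j * binomProb n q k else 0)
        (fun j _ => sum_nonneg fun k _ => by
          have := mul_nonneg (binomProb_nonneg m hp₀ hp₁ j) (binomProb_nonneg n hq₀ hq₁ k)
          split_ifs <;> simp [this])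
        (mem_range.2 m.succ_pos)

lemma exp_mul_binomProb_le {n k : ℕ} {P Q : ℝ} (hQ : 0 < Q) (hQP : Q ≤ P) (hP : P < 1)
    (hk : k ≤ n) :
    exp (-((P - Q) * (k - n * Q) / (Q * (1 - Q)))) * binomProb n P k ≤ binomProb n Q k := by
  have hP₀ : 0 < P := hQ.trans_le hQP
  have h1Q : 0 < 1 - Q := by linarith
  have hQ' := hQ.ne'
  have hP' := hP₀.ne'
  have hQ_ge : exp (-((P - Q) / Q)) * P ≤ Q := by
    have := exp_neg_div_one_sub_le (x := (P - Q) / P) (by rw [div_lt_one hP₀]; linarith)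
    have e : (P - Q) / P / (1 - (P - Q) / P) = (P - Q) / Q := by
      rw [show 1 - (P - Q) / P = Q / P by field_simp; ring, div_div_div_cancel_right₀ hP']
    rw [e] at this
    calc exp (-((P - Q) / Q)) * P ≤ (1 - (P - Q) / P) * P := by gcongr
      _ = Q := by field_simp; ring
  have h1Q_ge : exp ((P - Q) / (1 - Q)) * (1 - P) ≤ 1 - Q := by
    set x := (P - Q) / (1 - Q)
    calc exp x * (1 - P) = (1 - Q) * (exp x * (1 - x)) := by simp only [x]; field_simp; ring
      _ ≤ (1 - Q) * (exp x * exp (-x)) := by gcongr; exact one_sub_le_exp_neg x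
      _ = 1 - Q := by rw [← exp_add, add_neg_cancel, exp_zero, mul_one]
  have hexp : exp (-((P - Q) * (k - n * Q) / (Q * (1 - Q))))
      = exp (-((P - Q) / Q)) ^ k * exp ((P - Q) / (1 - Q)) ^ (n - k) := by
    rw [← exp_nat_mul, ← exp_nat_mul, ← exp_add, Nat.cast_sub hk]
    congr 1; field_simp; ring
  unfold binomProb
  rw [hexp]
  calc exp (-((P - Q) / Q)) ^ k * exp ((P - Q) / (1 - Q)) ^ (n - k)
        * (n.choose k * P ^ k * (1 - P) ^ (n - k))
      = n.choose k * (exp (-((P - Q) / Q)) * P) ^ k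
        * (exp ((P - Q) / (1 - Q)) * (1 - P)) ^ (n - k) := by rw [mul_pow, mul_pow]; ring
    _ ≤ n.choose k * Q ^ k * (1 - Q) ^ (n - k) := by
        have : 0 ≤ 1 - P := by linarith
        gcongr

lemma sq_sum_le_two_mul_sum_sum_ite {α : Type*} [LinearOrder α] (s : Finset α) {w : α → ℝ}
    (hw : ∀ i ∈ s, 0 ≤ w i) :
    (∑ i ∈ s, w i) ^ 2 ≤ 2 * ∑ i ∈ s, ∑ j ∈ s, if i ≤ j then w i * w j else 0 := by
  have hswap : ∑ i ∈ s, ∑ j ∈ s, (if j ≤ i then w i * w j else 0)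
      = ∑ i ∈ s, ∑ j ∈ s, if i ≤ j then w i * w j else 0 := by
    rw [sum_comm]
    exact sum_congr rfl fun i _ => sum_congr rfl fun j _ => by rw [mul_comm]
  calc (∑ i ∈ s, w i) ^ 2 = ∑ i ∈ s, ∑ j ∈ s, w i * w j := by rw [sq, sum_mul_sum]
    _ ≤ ∑ i ∈ s, ∑ j ∈ s,
          ((if i ≤ j then w i * w j else 0) + if j ≤ i then w i * w j else 0) := by
        gcongr with i hi j hj
        have := mul_nonneg (hw i hi) (hw j hj)
        rcases le_total i j with h | h <;> split_ifs <;> linarith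
    _ = _ := by simp only [sum_add_distrib, hswap]; ring

lemma exp_mul_le_prGE {n : ℕ} {P Q t : ℝ} (hQ : 0 < Q) (hQP : Q ≤ P) (hP : P < 1)
    (ht : 0 < t) :
    exp (-((P - Q) * (n * (P - Q) + t) / (Q * (1 - Q)))) * (1 / 2 - n * P * (1 - P) / t ^ 2)
      ≤ prGE n P n Q := by
  set E := (P - Q) * (n * (P - Q) + t) / (Q * (1 - Q))
  set c := n * P + t
  have hP₀ : 0 ≤ P := hQ.le.trans hQP
  have hb := binomProb_nonneg n hP₀ hP.le
  have hbQ := binomProb_nonneg n hQ.le (by linarith : Q ≤ 1)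
  have hhalf : 1 / 2 ≤ ∑ j ∈ range (n + 1), ∑ k ∈ range (n + 1),
      if j ≤ k then binomProb n P j * binomProb n P k else 0 := by
    have := sq_sum_le_two_mul_sum_sum_ite (range (n + 1)) fun k _ => hb k
    rw [sum_binomProb] at this
    linarith
  have htail : ∑ j ∈ range (n + 1), ∑ k ∈ range (n + 1),
      (if c ≤ (k : ℝ) then binomProb n P j * binomProb n P k else 0)
        ≤ n * P * (1 - P) / t ^ 2 := by
    simp only [← mul_ite_zero, ← mul_sum, ← sum_mul, sum_binomProb, one_mul, ← sum_filter]
    exact sum_binomProb_filter_le hP₀ hP.le ht fun k _ => le_abs.2 (Or.inl (by linarith))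
  -- change of measure in `k` on `{j ≤ k < c}`; elsewhere the left side is `≤ 0`
  have hterm : ∀ j ∈ range (n + 1), ∀ k ∈ range (n + 1),
      exp (-E) * ((if j ≤ k then binomProb n P j * binomProb n P k else 0)
          - if c ≤ (k : ℝ) then binomProb n P j * binomProb n P k else 0)
        ≤ if j ≤ k then binomProb n P j * binomProb n Q k else 0 := by
    intro j _ k hk
    have hbb := mul_nonneg (hb j) (hb k)
    by_cases hjk : j ≤ k <;> by_cases hck : c ≤ (k : ℝ) <;>
      simp only [hjk, hck, if_true, if_false, sub_self, mul_zero, zero_sub, mul_neg,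
        neg_nonpos, sub_zero, le_refl]
    · exact mul_nonneg (hb j) (hbQ k)
    · have hkn : k ≤ n := Nat.lt_succ_iff.1 (mem_range.1 hk)
      have hE : (P - Q) * (k - n * Q) / (Q * (1 - Q)) ≤ E := by
        have : 0 < Q * (1 - Q) := mul_pos hQ (by linarith)
        show _ ≤ (P - Q) * (n * (P - Q) + t) / (Q * (1 - Q))
        gcongr
        linarith [not_le.1 hck]
      calc exp (-E) * (binomProb n P j * binomProb n P k)
          = binomProb n P j * (exp (-E) * binomProb n P k) := by ring
        _ ≤ binomProb n P j * (exp (-((P - Q) * (k - n * Q) / (Q * (1 - Q))))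
              * binomProb n P k) :=
            mul_le_mul_of_nonneg_left
              (mul_le_mul_of_nonneg_right (exp_le_exp.2 (neg_le_neg hE)) (hb k)) (hb j)
        _ ≤ binomProb n P j * binomProb n Q k :=
            mul_le_mul_of_nonneg_left (exp_mul_binomProb_le hQ hQP hP hkn) (hb j)
    · positivity
  calc exp (-E) * (1 / 2 - n * P * (1 - P) / t ^ 2)
      ≤ exp (-E) * (∑ j ∈ range (n + 1), ∑ k ∈ range (n + 1),
          ((if j ≤ k then binomProb n P j * binomProb n P k else 0)
            - if c ≤ (k : ℝ) then binomProb n P j * binomProb n P k else 0)) := by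
        simp only [sum_sub_distrib]
        gcongr
    _ ≤ prGE n P n Q := by
        rw [prGE_eq, mul_sum]
        gcongr with j hj
        rw [mul_sum]
        gcongr with k hk
        exact hterm j hj k hk

lemma exists_pos_le_prGE {K : ℝ} (hK : 0 ≤ K) :
    ∃ δ > 0, ∀ (n : ℕ) (P Q : ℝ), 0 ≤ Q → Q ≤ P → P ≤ 2 / 3 →
      n * (P - Q) ^ 2 ≤ K * (P + Q) → δ ≤ prGE n P n Q := by
  refine ⟨min (exp (-(27 * K))) (exp (-(9 * (2 * K + 1))) / 4), by positivity, ?_⟩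
  intro n P Q hQ hQP hP hnK
  have hP₀ : 0 ≤ P := hQ.trans hQP
  have hn₀ : (0 : ℝ) ≤ n := n.cast_nonneg
  rcases le_or_gt (n * (P + Q)) (9 * K) with hsmall | hlarge
  · calc min (exp (-(27 * K))) (exp (-(9 * (2 * K + 1))) / 4)
        ≤ exp (-(27 * K)) := min_le_left _ _
      _ ≤ exp (-(3 * P)) ^ n := by
          rw [← exp_nat_mul]; exact exp_le_exp.2 (by nlinarith)
      _ ≤ (1 - P) ^ n := pow_le_pow_left₀ (exp_pos _).le (exp_neg_three_mul_le hP₀ hP) n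
      _ ≤ prGE n P n Q := one_sub_pow_le_prGE hP₀ (by linarith) hQ (by linarith)
  have hS : 0 < n * (P + Q) := by linarith
  have hn : (0 : ℝ) < n := by nlinarith
  have hD : (n * (P - Q)) ^ 2 ≤ K * (n * (P + Q)) := by
    have := mul_le_mul_of_nonneg_left hnK hn₀
    nlinarith
  -- `(n (P - Q))² ≤ K n (P + Q) < (n (P + Q))² / 9`
  have hQ3 : P + Q ≤ 3 * Q := by
    by_contra! h
    have h1 : n * (P + Q) / 3 < n * (P - Q) := by nlinarith
    have h2 : (n * (P + Q) / 3) ^ 2 < (n * (P - Q)) ^ 2 := by gcongr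
    nlinarith
  have hQ₀ : 0 < Q := by nlinarith
  set σ := sqrt (n * (P + Q))
  have hσ2 : σ ^ 2 = n * (P + Q) := sq_sqrt hS.le
  have hσ : 0 < σ := sqrt_pos.2 hS
  have hvar : n * P * (1 - P) / (2 * σ) ^ 2 ≤ 1 / 4 := by
    rw [div_le_iff₀ (by positivity), mul_pow, hσ2]
    nlinarith [mul_nonneg hn₀ (mul_nonneg hP₀ hP₀), mul_nonneg hn₀ hQ]
  have hexp : (P - Q) * (n * (P - Q) + 2 * σ) / (Q * (1 - Q)) ≤ 9 * (2 * K + 1) := by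
    have h1 : n * ((P - Q) * (n * (P - Q) + 2 * σ)) ≤ (2 * K + 1) * σ ^ 2 := by
      nlinarith [sq_nonneg (n * (P - Q) - σ)]
    have h2 : σ ^ 2 ≤ 9 * (n * (Q * (1 - Q))) := by
      rw [hσ2]; nlinarith [mul_nonneg hn₀ hQ]
    rw [div_le_iff₀ (mul_pos hQ₀ (by linarith))]
    refine le_of_mul_le_mul_left ?_ hn
    nlinarith
  calc min (exp (-(27 * K))) (exp (-(9 * (2 * K + 1))) / 4)
      ≤ exp (-(9 * (2 * K + 1))) * (1 / 4) := by
        rw [← div_eq_mul_one_div]; exact min_le_right _ _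
    _ ≤ exp (-((P - Q) * (n * (P - Q) + 2 * σ) / (Q * (1 - Q))))
          * (1 / 2 - n * P * (1 - P) / (2 * σ) ^ 2) := by
        gcongr
        linarith
    _ ≤ prGE n P n Q := exp_mul_le_prGE hQ₀ hQP (by linarith) (by positivity)

lemma Pn_nonneg (n : ℕ) {p q : ℝ} (hp : 0 ≤ p ∧ p ≤ 2 / 3) (hq : 0 ≤ q ∧ q ≤ 2 / 3) :
    0 ≤ Pn n p q :=
  (pow_nonneg (by linarith [max_le hp.2 hq.2]) n).trans <| one_sub_pow_le_prGE
    (le_max_of_le_left hp.1) (by linarith [max_le hp.2 hq.2]) (le_min hp.1 hq.1)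
    (by linarith [min_le_left p q])

lemma Pn_le_four_div {n : ℕ} {p q : ℝ} (hp : 0 ≤ p ∧ p ≤ 2 / 3) (hq : 0 ≤ q ∧ q ≤ 2 / 3)
    (h : 0 < n * (p - q) ^ 2 / (p + q)) :
    Pn n p q ≤ 4 * (n * (p - q) ^ 2 / (p + q))⁻¹ := by
  have hn : 0 < n := Nat.pos_of_ne_zero (by rintro rfl; simp at h)
  have hpq : p ≠ q := by rintro rfl; simp at h
  calc Pn n p q ≤ 4 * (max p q + min p q) / (n * (max p q - min p q) ^ 2) :=
        prGE_le_four_mul_div (le_min hp.1 hq.1) (min_lt_max.2 hpq)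
          (max_le (by linarith) (by linarith)) hn
    _ = 4 * (n * (p - q) ^ 2 / (p + q))⁻¹ := by
        rw [max_add_min, max_sub_min_eq_abs', sq_abs, inv_div, mul_div_assoc]

lemma exists_pos_le_Pn {K : ℝ} (hK : 0 ≤ K) :
    ∃ δ > 0, ∀ (n : ℕ) (p q : ℝ), 0 ≤ p → p ≤ 2 / 3 → 0 ≤ q → q ≤ 2 / 3 →
      n * (p - q) ^ 2 ≤ K * (p + q) → δ ≤ Pn n p q := by
  obtain ⟨δ, hδ, h⟩ := exists_pos_le_prGE hK
  refine ⟨δ, hδ, fun n p q hp₀ hp hq₀ hq hpq => h n _ _ (le_min hp₀ hq₀) min_le_max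
    (max_le hp hq) ?_⟩
  rwa [max_add_min, max_sub_min_eq_abs', sq_abs]

theorem weak_consistency_characterization
    (p q : ℕ → ℝ)
    (hp : ∀ n, 0 ≤ p n ∧ p n ≤ 2 / 3) (hq : ∀ n, 0 ≤ q n ∧ q n ≤ 2 / 3)
    (hpos : ∀ n, 0 < p n + q n) :
    Tendsto (fun n : ℕ => Pn n (p n) (q n)) atTop (nhds 0) ↔
    Tendsto (fun n : ℕ => (n : ℝ) * (p n - q n) ^ 2 / (p n + q n)) atTop atTop := by
  constructor
  · intro hP
    refine tendsto_atTop.2 fun b => ?_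
    by_contra hb
    obtain ⟨δ, hδ, hlow⟩ := exists_pos_le_Pn (le_max_right b 0)
    have hbig : ∃ᶠ n in atTop, δ ≤ Pn n (p n) (q n) := (not_eventually.1 hb).mono fun n hn =>
      hlow n _ _ (hp n).1 (hp n).2 (hq n).1 (hq n).2 <| by
        have := (div_lt_iff₀ (hpos n)).1 (not_le.1 hn)
        nlinarith [le_max_left b 0, hpos n]
    obtain ⟨n, hlt, hge⟩ := ((hP.eventually (gt_mem_nhds hδ)).and_frequently hbig).exists
    exact absurd hge (not_le.2 hlt)
  · intro hT
    exact squeeze_zero' (Eventually.of_forall fun n => Pn_nonneg n (hp n) (hq n))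
      ((hT.eventually_gt_atTop 0).mono fun n hn => Pn_le_four_div (hp n) (hq n) hn)
      (by simpa using hT.inv_tendsto_atTop.const_mul 4)
end

section
/- There is a universal constant C > 0 such that the following holds. Let X ~ Binomial(m, p) and Y ~ Binomial(n, q) be independent with m ≥ 2, q ∈ [0,1], mp ≥ 64 log m, and p ≤ 2/3. Then for every real ℓ with 1 ≤ ℓ ≤ √(mp log m), Pr(Y ≥ X − ℓ) ≤ Pr(Y ≥ X) · exp(C ℓ √(log m / (mp))) + 2 m^{-2}. -/
open Real Filter

/-
Write `μ = m p` and `ε = √(log m / μ)`; then `ε ≤ 1/8` and `ℓ ≤ ε μ`. Above `(1 - 4ε) μ`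
consecutive binomial weights satisfy `P(X = k + 1) ≤ (1 + 24ε) P(X = k)`, so on the bulk
`X ≥ (1 - 3ε) μ` shifting `X` down by `⌊ℓ⌋` costs at most a factor `exp (24 ℓ ε)`; as `Y` is
integer-valued, `Y ≥ X - ℓ` is the same event as `Y ≥ X - ⌊ℓ⌋`. Chernoff's bound gives
`P(X < (1 - 3ε) μ) ≤ exp (-9 ε² μ / 4) = m ^ (-9/4)`. Hence `C = 24` works.
-/

open Finset

noncomputable def binomUpperTail (n : ℕ) (q x : ℝ) : ℝ :=
  ∑ k ∈ range (n + 1), if x ≤ (k : ℝ) then binomProb n q k else 0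

noncomputable def binomLowerTail (m : ℕ) (p x : ℝ) : ℝ :=
  ∑ j ∈ range (m + 1), if (j : ℝ) < x then binomProb m p j else 0

section binomProb

variable {m : ℕ} {p : ℝ}

lemma binomProb_nonneg_s5 (hp0 : 0 ≤ p) (hp1 : p ≤ 1) (k : ℕ) : 0 ≤ binomProb m p k := by
  have : 0 ≤ 1 - p := by linarith
  unfold binomProb
  positivity

lemma sum_range_binomProb (m : ℕ) (p : ℝ) : ∑ k ∈ range (m + 1), binomProb m p k = 1 := by
  have h := add_pow p (1 - p) m
  rw [add_sub_cancel, one_pow] at h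
  rw [h]
  exact sum_congr rfl fun k _ => by unfold binomProb; ring

lemma binomProb_succ_mul {k : ℕ} (hk : k < m) :
    binomProb m p (k + 1) * ((k + 1) * (1 - p)) = binomProb m p k * ((m - k) * p) := by
  have hchoose : (m.choose (k + 1) : ℝ) * (k + 1) = m.choose k * (m - k) := by
    rw [← Nat.cast_sub hk.le]
    exact_mod_cast Nat.choose_succ_right_eq m k
  unfold binomProb
  rw [show m - k = m - (k + 1) + 1 by omega, pow_succ (1 - p), pow_succ p]
  linear_combination (p ^ k * p * (1 - p) ^ (m - (k + 1)) * (1 - p)) * hchoose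

lemma binomProb_succ_le_exp_mul {ε : ℝ} {k : ℕ} (hp0 : 0 ≤ p) (hp : p ≤ 2 / 3)
    (hε0 : 0 ≤ ε) (hε : ε ≤ 1 / 8) (hk : (1 - 4 * ε) * (m * p) ≤ k) (hkm : k < m) :
    binomProb m p (k + 1) ≤ exp (24 * ε) * binomProb m p k := by
  have hμ : 0 ≤ (m : ℝ) * p := by positivity
  have hk2 : m * p / 2 ≤ (k : ℝ) := by nlinarith
  have hD : m * p / 6 ≤ (k + 1) * (1 - p) := by nlinarith
  have hratio : (m - k) * p ≤ exp (24 * ε) * ((k + 1) * (1 - p)) := by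
    have hexp := add_one_le_exp (24 * ε)
    nlinarith [mul_le_mul_of_nonneg_right hexp (by linarith : 0 ≤ (k + 1) * (1 - p)),
      mul_le_mul_of_nonneg_left hD (by linarith : 0 ≤ 24 * ε)]
  have hb := binomProb_nonneg_s5 (m := m) hp0 (by linarith) k
  have hpos : (0 : ℝ) < (k + 1) * (1 - p) := mul_pos (by positivity) (by linarith)
  refine le_of_mul_le_mul_right ?_ hpos
  calc binomProb m p (k + 1) * ((k + 1) * (1 - p)) = binomProb m p k * ((m - k) * p) :=
        binomProb_succ_mul hkm
    _ ≤ binomProb m p k * (exp (24 * ε) * ((k + 1) * (1 - p))) := by gcongr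
    _ = exp (24 * ε) * binomProb m p k * ((k + 1) * (1 - p)) := by ring

end binomProb

lemma le_pow_mul_of_succ_le {f : ℕ → ℝ} {r : ℝ} (hr : 0 ≤ r) {j L : ℕ} (hL : L ≤ j)
    (hf : ∀ k, j - L ≤ k → k < j → f (k + 1) ≤ r * f k) : f j ≤ r ^ L * f (j - L) := by
  induction L with
  | zero => simp
  | succ L ih =>
    have hstep : f (j - L) ≤ r * f (j - (L + 1)) := by
      have := hf (j - (L + 1)) le_rfl (by omega)
      rwa [show j - (L + 1) + 1 = j - L by omega] at this
    calc f j ≤ r ^ L * f (j - L) := ih (by omega) fun k hk hkj => hf k (by omega) hkj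
      _ ≤ r ^ L * (r * f (j - (L + 1))) := by gcongr
      _ = r ^ (L + 1) * f (j - (L + 1)) := by ring

lemma sum_range_ite_sub_le {f : ℕ → ℝ} (hf : ∀ i, 0 ≤ f i) (L N : ℕ) :
    ∑ j ∈ range N, (if L ≤ j then f (j - L) else 0) ≤ ∑ j ∈ range N, f j := by
  rw [← sum_filter, show (range N).filter (L ≤ ·) = Ico L N by ext; simp [and_comm],
    sum_Ico_eq_sum_range]
  simp only [add_tsub_cancel_left]
  exact sum_le_sum_of_subset_of_nonneg (range_subset_range.2 (Nat.sub_le N L))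
    fun i _ _ => hf i

section tails

variable {m n : ℕ} {p q : ℝ}

lemma binomUpperTail_nonneg (hq0 : 0 ≤ q) (hq1 : q ≤ 1) (x : ℝ) : 0 ≤ binomUpperTail n q x :=
  sum_nonneg fun k _ => by
    split_ifs
    exacts [binomProb_nonneg_s5 hq0 hq1 k, le_rfl]

lemma binomUpperTail_le_one (hq0 : 0 ≤ q) (hq1 : q ≤ 1) (x : ℝ) : binomUpperTail n q x ≤ 1 :=
  calc binomUpperTail n q x ≤ ∑ k ∈ range (n + 1), binomProb n q k :=
        sum_le_sum fun k _ => by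
          split_ifs
          exacts [le_rfl, binomProb_nonneg_s5 hq0 hq1 k]
    _ = 1 := sum_range_binomProb n q

lemma binomUpperTail_eq_of_le_of_lt {x : ℝ} {a : ℕ} (hxa : x ≤ a) (hax : (a : ℝ) < x + 1) :
    binomUpperTail n q x = binomUpperTail n q a := by
  refine sum_congr rfl fun k _ => if_congr ⟨fun hk => ?_, hxa.trans⟩ rfl rfl
  have : a < k + 1 := by exact_mod_cast (by linarith : (a : ℝ) < k + 1)
  exact_mod_cast Nat.lt_succ_iff.1 this

lemma prGEshift_eq_sum (ℓ : ℝ) :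
    prGEshift m p n q ℓ = ∑ j ∈ range (m + 1), binomProb m p j * binomUpperTail n q (j - ℓ) := by
  unfold prGEshift binomUpperTail
  refine sum_congr rfl fun j _ => ?_
  rw [mul_sum]
  exact sum_congr rfl fun k _ => by rw [mul_ite, mul_zero]

lemma sum_range_binomProb_mul_exp_le (hp0 : 0 ≤ p) (hp1 : p ≤ 1) (s : ℝ) :
    ∑ j ∈ range (m + 1), binomProb m p j * exp (-(s * j)) ≤ exp (m * p * (exp (-s) - 1)) := by
  have hmgf : ∑ j ∈ range (m + 1), binomProb m p j * exp (-(s * j)) =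
      (p * exp (-s) + (1 - p)) ^ m := by
    rw [add_pow]
    refine sum_congr rfl fun j _ => ?_
    rw [binomProb, mul_pow, ← exp_nat_mul, show (j : ℝ) * -s = -(s * j) by ring]
    ring
  have hbase : p * exp (-s) + (1 - p) ≤ exp (p * (exp (-s) - 1)) := by
    linarith [add_one_le_exp (p * (exp (-s) - 1))]
  rw [hmgf, mul_assoc, exp_nat_mul]
  exact pow_le_pow_left₀ (by nlinarith [exp_pos (-s)]) hbase m

lemma binomLowerTail_le_exp_mul (hp0 : 0 ≤ p) (hp1 : p ≤ 1) {s : ℝ} (hs : 0 ≤ s) (x : ℝ) :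
    binomLowerTail m p x ≤ exp (s * x) * exp (m * p * (exp (-s) - 1)) := by
  refine le_trans (sum_le_sum fun j _ => ?_)
    (by rw [← mul_sum]; gcongr; exact sum_range_binomProb_mul_exp_le hp0 hp1 s)
  have hb := binomProb_nonneg_s5 (m := m) hp0 hp1 j
  split_ifs with hj
  · rw [mul_left_comm, ← exp_add]
    exact le_mul_of_one_le_right hb (one_le_exp (by nlinarith))
  · positivity

lemma exp_neg_le_one_sub_add_sq {s : ℝ} (hs : 0 ≤ s) : exp (-s) ≤ 1 - s + s ^ 2 := by
  have h : exp (-s) * (s + 1) ≤ 1 := by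
    calc exp (-s) * (s + 1) ≤ exp (-s) * exp s := by gcongr; exact add_one_le_exp s
      _ = 1 := by rw [← exp_add, neg_add_cancel, exp_zero]
  nlinarith [exp_pos (-s), sq_nonneg s]

lemma binomLowerTail_le_exp (hp0 : 0 ≤ p) (hp1 : p ≤ 1) {δ : ℝ} (hδ : 0 ≤ δ) :
    binomLowerTail m p ((1 - δ) * (m * p)) ≤ exp (-(δ ^ 2 * (m * p)) / 4) := by
  -- `s = δ / 2` minimises the resulting bound `-s δ μ + s² μ` on the exponent
  refine (binomLowerTail_le_exp_mul hp0 hp1 (by positivity : 0 ≤ δ / 2) _).trans ?_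
  rw [← exp_add, exp_le_exp]
  have hμ : 0 ≤ (m : ℝ) * p := by positivity
  nlinarith [mul_le_mul_of_nonneg_left
    (exp_neg_le_one_sub_add_sq (by positivity : 0 ≤ δ / 2)) hμ]

end tails

section bulk

variable {m n : ℕ} {p q ε : ℝ}

lemma binomProb_le_exp_pow_mul_binomProb_sub (hp0 : 0 ≤ p) (hp : p ≤ 2 / 3) (hε0 : 0 ≤ ε)
    (hε : ε ≤ 1 / 8) {j L : ℕ} (hjm : j ≤ m) (hL : (1 - 4 * ε) * (m * p) + L ≤ j) :
    binomProb m p j ≤ exp (24 * ε) ^ L * binomProb m p (j - L) := by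
  have hLj : L ≤ j := by
    exact_mod_cast (by nlinarith [mul_nonneg hp0 (Nat.cast_nonneg (α := ℝ) m)] : (L : ℝ) ≤ j)
  refine le_pow_mul_of_succ_le (exp_nonneg _) hLj fun k hk hkj =>
    binomProb_succ_le_exp_mul hp0 hp hε0 hε ?_ (by omega)
  have : (j : ℝ) ≤ k + L := by exact_mod_cast (by omega : j ≤ k + L)
  linarith

lemma binomProb_mul_binomUpperTail_sub_le (hp0 : 0 ≤ p) (hp : p ≤ 2 / 3) (hq0 : 0 ≤ q)
    (hq1 : q ≤ 1) (hε0 : 0 ≤ ε) (hε : ε ≤ 1 / 8) {ℓ : ℝ} (hℓ0 : 0 ≤ ℓ) (hℓ : ℓ ≤ ε * (m * p))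
    {j : ℕ} (hjm : j ≤ m) (hbulk : (1 - 3 * ε) * (m * p) ≤ j) :
    binomProb m p j * binomUpperTail n q (j - ℓ) ≤
      exp (24 * ℓ * ε) * (binomProb m p (j - ⌊ℓ⌋₊) * binomUpperTail n q ((j - ⌊ℓ⌋₊ : ℕ) : ℝ)) := by
  set L := ⌊ℓ⌋₊
  have hLℓ : (L : ℝ) ≤ ℓ := Nat.floor_le hℓ0
  have hLj : L ≤ j := by exact_mod_cast (by nlinarith : (L : ℝ) ≤ j)
  have hU : binomUpperTail n q (j - ℓ) = binomUpperTail n q ((j - L : ℕ) : ℝ) :=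
    binomUpperTail_eq_of_le_of_lt (by rw [Nat.cast_sub hLj]; linarith)
      (by rw [Nat.cast_sub hLj]; linarith [Nat.lt_floor_add_one ℓ])
  have hchain : binomProb m p j ≤ exp (24 * ε) ^ L * binomProb m p (j - L) :=
    binomProb_le_exp_pow_mul_binomProb_sub hp0 hp hε0 hε hjm (by linarith)
  have hexp : exp (24 * ε) ^ L ≤ exp (24 * ℓ * ε) := by
    rw [← exp_nat_mul, exp_le_exp]
    nlinarith
  have := binomUpperTail_nonneg (n := n) hq0 hq1 ((j - L : ℕ) : ℝ)
  have := binomProb_nonneg_s5 (m := m) hp0 (by linarith) (j - L)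
  rw [hU]
  calc binomProb m p j * binomUpperTail n q ((j - L : ℕ) : ℝ)
      ≤ exp (24 * ε) ^ L * binomProb m p (j - L) * binomUpperTail n q ((j - L : ℕ) : ℝ) := by
        gcongr
    _ ≤ exp (24 * ℓ * ε) * binomProb m p (j - L) * binomUpperTail n q ((j - L : ℕ) : ℝ) := by
        gcongr
    _ = _ := by ring

lemma prGEshift_le_prGE_mul_exp_add_binomLowerTail (hp0 : 0 ≤ p) (hp : p ≤ 2 / 3) (hq0 : 0 ≤ q)
    (hq1 : q ≤ 1) (hε0 : 0 ≤ ε) (hε : ε ≤ 1 / 8) {ℓ : ℝ} (hℓ0 : 0 ≤ ℓ) (hℓ : ℓ ≤ ε * (m * p)) :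
    prGEshift m p n q ℓ ≤
      prGE m p n q * exp (24 * ℓ * ε) + binomLowerTail m p ((1 - 3 * ε) * (m * p)) := by
  set L := ⌊ℓ⌋₊
  have hb : ∀ i, 0 ≤ binomProb m p i := binomProb_nonneg_s5 hp0 (by linarith)
  have hterm : ∀ j ∈ range (m + 1), binomProb m p j * binomUpperTail n q (j - ℓ) ≤
      exp (24 * ℓ * ε) *
          (if L ≤ j then binomProb m p (j - L) * binomUpperTail n q ((j - L : ℕ) : ℝ) else 0) +
        if (j : ℝ) < (1 - 3 * ε) * (m * p) then binomProb m p j else 0 := by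
    intro j hj
    by_cases hbulk : (j : ℝ) < (1 - 3 * ε) * (m * p)
    · have := binomUpperTail_nonneg (n := n) hq0 hq1 ((j - L : ℕ) : ℝ)
      have := hb (j - L)
      refine le_add_of_nonneg_of_le (by split_ifs <;> positivity) ?_
      rw [if_pos hbulk]
      exact mul_le_of_le_one_right (hb j) (binomUpperTail_le_one hq0 hq1 _)
    · have hμ := mul_nonneg (Nat.cast_nonneg (α := ℝ) m) hp0
      have hLj : L ≤ j := by
        exact_mod_cast (by nlinarith [Nat.floor_le hℓ0] : (L : ℝ) ≤ j)
      rw [if_pos hLj, if_neg hbulk, add_zero]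
      exact binomProb_mul_binomUpperTail_sub_le hp0 hp hq0 hq1 hε0 hε hℓ0 hℓ
        (Nat.lt_succ_iff.1 (mem_range.1 hj)) (not_lt.1 hbulk)
  have hshift := sum_range_ite_sub_le (f := fun i => binomProb m p i * binomUpperTail n q i)
    (fun i => mul_nonneg (hb i) (binomUpperTail_nonneg hq0 hq1 i)) L (m + 1)
  rw [prGEshift_eq_sum, prGE, prGEshift_eq_sum]
  refine (sum_le_sum hterm).trans ?_
  rw [sum_add_distrib, ← mul_sum, binomLowerTail]
  simp only [sub_zero]
  linarith [mul_le_mul_of_nonneg_left hshift (exp_nonneg (24 * ℓ * ε))]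

end bulk

theorem large_majority_upper_bound :
    ∃ C : ℝ, 0 < C ∧ ∀ (m n : ℕ) (p q ℓ : ℝ),
      2 ≤ m → 0 ≤ q → q ≤ 1 → 0 ≤ p → p ≤ 2 / 3 →
      64 * Real.log m ≤ (m : ℝ) * p →
      1 ≤ ℓ → ℓ ≤ Real.sqrt ((m : ℝ) * p * Real.log m) →
      prGEshift m p n q ℓ ≤
        prGE m p n q * Real.exp (C * ℓ * Real.sqrt (Real.log m / ((m : ℝ) * p)))
          + 2 / (m : ℝ) ^ 2 := by
  refine ⟨24, by norm_num, fun m n p q ℓ hm hq0 hq1 hp0 hp hmp hℓ1 hℓ => ?_⟩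
  have hm1 : (1 : ℝ) < m := by exact_mod_cast hm
  have hlog : 0 < log m := log_pos hm1
  have hμ : 0 < (m : ℝ) * p := by linarith
  set ε := √(log m / (m * p))
  have hε2 : ε ^ 2 * (m * p) = log m := by
    rw [sq_sqrt (by positivity), div_mul_cancel₀ _ hμ.ne']
  have hεμ : ε * (m * p) = √(m * p * log m) := by
    rw [show (m : ℝ) * p * log m = log m / (m * p) * (m * p) ^ 2 by field_simp,
      sqrt_mul (by positivity), sqrt_sq hμ.le]
  have hε : ε ≤ 1 / 8 := by nlinarith [sqrt_nonneg (log m / (m * p))]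
  have htail : binomLowerTail m p ((1 - 3 * ε) * (m * p)) ≤ 2 / (m : ℝ) ^ 2 :=
    calc binomLowerTail m p ((1 - 3 * ε) * (m * p))
        ≤ exp (-((3 * ε) ^ 2 * (m * p)) / 4) :=
          binomLowerTail_le_exp hp0 (by linarith) (by positivity)
      _ ≤ exp (-(2 * log m)) := by rw [exp_le_exp]; nlinarith
      _ = 1 / (m : ℝ) ^ 2 := by
          rw [exp_neg, ← Nat.cast_ofNat, ← log_pow, exp_log (by positivity), one_div]
      _ ≤ 2 / (m : ℝ) ^ 2 := by gcongr; norm_num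
  linarith [prGEshift_le_prGE_mul_exp_add_binomLowerTail (n := n) hp0 hp hq0 hq1 (sqrt_nonneg _) hε
    (by linarith) (hεμ ▸ hℓ)]
end

section
/- Let C > 0 be a constant and let a_n, b_n be sequences with C^{-1} ≤ a_n, b_n ≤ C for all sufficiently large n. Set p_n = a_n (log n)/n, q_n = b_n (log n)/n, and c_n = a_n + b_n. Let X ~ Binomial(n, p_n) and Y ~ Binomial(n, q_n) be independent and Z = X + Y. Then there is a sequence ε_n → 0 such that for every integer k with 0 ≤ k ≤ 10 c_n log n, |Pr(Z = k) · k! · n^{c_n} / (c_n log n)^k − 1| ≤ ε_n. -/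
/-!
With `λ = np`, `μ = nq`, `Aⱼ = j! Pr(X = j) e^λ` and `Bᵢ = i! Pr(Y = i) e^μ` one has
`k! Pr(Z = k) e^{λ+μ} = ∑ⱼ (k choose j) Aⱼ B_{k-j}`. For `j ≤ k` and `p ≤ 1/2`,
`((n - k) p)^j e^{-2np²} ≤ Aⱼ ≤ e^{jp} λ^j`, because `(n - k)^j ≤ n(n-1)⋯(n-j+1) ≤ n^j` and
`e^{-p-2p²} ≤ 1 - p ≤ e^{-p}`. The binomial theorem then sandwiches
`k! Pr(Z = k) e^{λ+μ} / (λ+μ)^k` between `(1 - k/n)^k e^{-2n(p²+q²)}` and `e^{k(p+q)}`, and for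
`k = O(log n)`, `p, q = O(log n / n)` both bounds are `1 + O((log n)² / n)`.
-/

open Real Filter

/-- The probability that `Z = X + Y` equals `k`, for independent
`X ~ Binomial(n, p)` and `Y ~ Binomial(n, q)`. -/
noncomputable def prSumEq (n : ℕ) (p q : ℝ) (k : ℕ) : ℝ :=
  ∑ j ∈ Finset.range (k + 1), binomProb n p j * binomProb n q (k - j)

open Finset
open scoped Nat

lemma binomProb_mul_factorial (n j : ℕ) (p : ℝ) :
    binomProb n p j * j ! = n.descFactorial j * p ^ j * (1 - p) ^ (n - j) := by
  rw [binomProb, Nat.descFactorial_eq_factorial_mul_choose]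
  push_cast
  ring

lemma binomProb_mul_factorial_mul_exp_le {p : ℝ} (hp : 0 ≤ p) (hp1 : p ≤ 1) (n j : ℕ) :
    binomProb n p j * j ! * exp (n * p) ≤ exp (j * p) * (n * p) ^ j := by
  have hdesc : (n.descFactorial j : ℝ) ≤ (n : ℝ) ^ j := by
    exact_mod_cast Nat.descFactorial_le_pow n j
  have hsub : (n : ℝ) - j ≤ (n - j : ℕ) := by
    rcases le_total j n with h | h
    · rw [Nat.cast_sub h]
    · rw [Nat.sub_eq_zero_of_le h, Nat.cast_zero, sub_nonpos]; exact_mod_cast h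
  calc binomProb n p j * j ! * exp (n * p)
      = n.descFactorial j * p ^ j * (1 - p) ^ (n - j) * exp (n * p) := by
        rw [binomProb_mul_factorial]
    _ ≤ (n : ℝ) ^ j * p ^ j * exp (-p) ^ (n - j) * exp (n * p) := by
        have h1p : 0 ≤ 1 - p := by linarith
        gcongr
        linarith [add_one_le_exp (-p)]
    _ = exp (n * p - (n - j : ℕ) * p) * (n * p) ^ j := by
        rw [← exp_nat_mul, sub_eq_add_neg, exp_add, mul_pow]; ring_nf
    _ ≤ exp (j * p) * (n * p) ^ j := by
        gcongr
        nlinarith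

lemma exp_neg_le_one_sub {p : ℝ} (hp2 : p ≤ 1 / 2) :
    exp (-(p + 2 * p ^ 2)) ≤ 1 - p := by
  rw [exp_neg, inv_le_iff_one_le_mul₀ (exp_pos _)]
  -- `(1 + p + 2p²)(1 - p) = 1 + p² (1 - 2p)`
  nlinarith [add_one_le_exp (p + 2 * p ^ 2), mul_nonneg (sq_nonneg p) (by linarith : 0 ≤ 1 - 2 * p)]

lemma le_binomProb_mul_factorial_mul_exp {p : ℝ} (hp : 0 ≤ p) (hp2 : p ≤ 1 / 2) {n j k : ℕ}
    (hjk : j ≤ k) :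
    exp (-(2 * n * p ^ 2)) * ((n - k : ℕ) * p) ^ j ≤ binomProb n p j * j ! * exp (n * p) := by
  have hdesc : ((n - k : ℕ) : ℝ) ^ j ≤ n.descFactorial j := by
    exact_mod_cast (Nat.pow_le_pow_left (by omega) j).trans (Nat.pow_sub_le_descFactorial n j)
  have hpow : exp (-(n * p + 2 * n * p ^ 2)) ≤ (1 - p) ^ (n - j) :=
    calc exp (-(n * p + 2 * n * p ^ 2)) = exp (-(p + 2 * p ^ 2)) ^ n := by
          rw [← exp_nat_mul]; ring_nf
      _ ≤ (1 - p) ^ n := by gcongr; exact exp_neg_le_one_sub hp2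
      _ ≤ (1 - p) ^ (n - j) := pow_le_pow_of_le_one (by linarith) (by linarith) (Nat.sub_le n j)
  calc exp (-(2 * n * p ^ 2)) * ((n - k : ℕ) * p) ^ j
      = ((n - k : ℕ) : ℝ) ^ j * p ^ j * exp (-(n * p + 2 * n * p ^ 2)) * exp (n * p) := by
        rw [mul_pow, mul_assoc _ _ (exp (n * p)), ← exp_add]; ring_nf
    _ ≤ n.descFactorial j * p ^ j * (1 - p) ^ (n - j) * exp (n * p) := by gcongr
    _ = binomProb n p j * j ! * exp (n * p) := by rw [binomProb_mul_factorial]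

lemma prSumEq_mul_factorial_mul_exp (n : ℕ) (p q : ℝ) (k : ℕ) :
    prSumEq n p q k * k ! * exp (n * (p + q)) =
      ∑ j ∈ range (k + 1), k.choose j * (binomProb n p j * j ! * exp (n * p)) *
        (binomProb n q (k - j) * (k - j)! * exp (n * q)) := by
  rw [prSumEq, sum_mul, sum_mul]
  refine sum_congr rfl fun j hj => ?_
  rw [← Nat.choose_mul_factorial_mul_factorial (Nat.lt_succ_iff.mp (mem_range.mp hj)), mul_add,
    exp_add]
  push_cast
  ring

section Convolution

variable {f g : ℕ → ℝ} {c d x y : ℝ} {k : ℕ}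

lemma sum_choose_mul_le (hf : ∀ j ≤ k, f j ≤ c * x ^ j) (hg : ∀ j ≤ k, g j ≤ d * y ^ j)
    (hg0 : ∀ j ≤ k, 0 ≤ g j) (hc : 0 ≤ c) (hx : 0 ≤ x) :
    ∑ j ∈ range (k + 1), k.choose j * f j * g (k - j) ≤ c * d * (x + y) ^ k := by
  rw [add_pow, mul_sum]
  refine sum_le_sum fun j hj => ?_
  have hjk := Nat.lt_succ_iff.mp (mem_range.mp hj)
  have := mul_le_mul (hf j hjk) (hg (k - j) (Nat.sub_le k j)) (hg0 _ (Nat.sub_le k j))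
    (by positivity)
  calc (k.choose j : ℝ) * f j * g (k - j) = k.choose j * (f j * g (k - j)) := by ring
    _ ≤ k.choose j * (c * x ^ j * (d * y ^ (k - j))) := by gcongr
    _ = c * d * (x ^ j * y ^ (k - j) * k.choose j) := by ring

lemma le_sum_choose_mul (hf : ∀ j ≤ k, c * x ^ j ≤ f j) (hg : ∀ j ≤ k, d * y ^ j ≤ g j)
    (hc : 0 ≤ c) (hx : 0 ≤ x) (hd : 0 ≤ d) (hy : 0 ≤ y) :
    c * d * (x + y) ^ k ≤ ∑ j ∈ range (k + 1), k.choose j * f j * g (k - j) := by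
  rw [add_pow, mul_sum]
  refine sum_le_sum fun j hj => ?_
  have hjk := Nat.lt_succ_iff.mp (mem_range.mp hj)
  have := mul_le_mul (hf j hjk) (hg (k - j) (Nat.sub_le k j)) (by positivity)
    ((by positivity : 0 ≤ c * x ^ j).trans (hf j hjk))
  calc c * d * (x ^ j * y ^ (k - j) * k.choose j)
      = k.choose j * (c * x ^ j * (d * y ^ (k - j))) := by ring
    _ ≤ k.choose j * (f j * g (k - j)) := by gcongr
    _ = k.choose j * f j * g (k - j) := by ring

end Convolution

variable {p q : ℝ} {n k : ℕ}

lemma prSumEq_mul_factorial_mul_exp_le (hp : 0 ≤ p) (hp1 : p ≤ 1) (hq : 0 ≤ q) (hq1 : q ≤ 1) :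
    prSumEq n p q k * k ! * exp (n * (p + q)) ≤ exp (k * (p + q)) * (n * (p + q)) ^ k := by
  have hterm {r : ℝ} (hr : 0 ≤ r) (hr1 : r ≤ 1) (j : ℕ) (hj : j ≤ k) :
      binomProb n r j * j ! * exp (n * r) ≤ exp (k * r) * (n * r) ^ j :=
    (binomProb_mul_factorial_mul_exp_le hr hr1 n j).trans (by gcongr)
  have hnonneg {r : ℝ} (hr : 0 ≤ r) (hr1 : r ≤ 1) (j : ℕ) :
      0 ≤ binomProb n r j * j ! * exp (n * r) := by
    have : 0 ≤ 1 - r := by linarith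
    unfold binomProb; positivity
  calc prSumEq n p q k * k ! * exp (n * (p + q))
      = ∑ j ∈ range (k + 1), k.choose j * (binomProb n p j * j ! * exp (n * p)) *
          (binomProb n q (k - j) * (k - j)! * exp (n * q)) :=
        prSumEq_mul_factorial_mul_exp n p q k
    _ ≤ exp (k * p) * exp (k * q) * (n * p + n * q) ^ k :=
        sum_choose_mul_le (hterm hp hp1) (hterm hq hq1) (fun j _ => hnonneg hq hq1 j)
          (exp_pos _).le (by positivity)
    _ = exp (k * (p + q)) * (n * (p + q)) ^ k := by rw [← exp_add]; ring_nf

lemma le_prSumEq_mul_factorial_mul_exp (hp : 0 ≤ p) (hp2 : p ≤ 1 / 2) (hq : 0 ≤ q)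
    (hq2 : q ≤ 1 / 2) :
    exp (-(2 * n * (p ^ 2 + q ^ 2))) * ((n - k : ℕ) * (p + q)) ^ k ≤
      prSumEq n p q k * k ! * exp (n * (p + q)) := by
  calc exp (-(2 * n * (p ^ 2 + q ^ 2))) * ((n - k : ℕ) * (p + q)) ^ k
      = exp (-(2 * n * p ^ 2)) * exp (-(2 * n * q ^ 2)) *
          ((n - k : ℕ) * p + (n - k : ℕ) * q) ^ k := by
        rw [← exp_add]; ring_nf
    _ ≤ ∑ j ∈ range (k + 1), k.choose j * (binomProb n p j * j ! * exp (n * p)) *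
          (binomProb n q (k - j) * (k - j)! * exp (n * q)) :=
        le_sum_choose_mul (fun j hj => le_binomProb_mul_factorial_mul_exp hp hp2 hj)
          (fun j hj => le_binomProb_mul_factorial_mul_exp hq hq2 hj) (exp_pos _).le
          (by positivity) (exp_pos _).le (by positivity)
    _ = prSumEq n p q k * k ! * exp (n * (p + q)) := (prSumEq_mul_factorial_mul_exp n p q k).symm

lemma abs_sub_one_le_exp_sub_one {x t : ℝ} (hlo : 1 - t ≤ x) (hhi : x ≤ exp t) :
    |x - 1| ≤ exp t - 1 := by
  rw [abs_le]
  constructor <;> linarith [add_one_le_exp t]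

lemma abs_prSumEq_mul_factorial_mul_exp_div_sub_one_le (hp : 0 ≤ p) (hp2 : p ≤ 1 / 2)
    (hq : 0 ≤ q) (hq2 : q ≤ 1 / 2) (hpq : 0 < p + q) (hkn : k ≤ n) (hn : 0 < n) :
    |prSumEq n p q k * k ! * exp (n * (p + q)) / (n * (p + q)) ^ k - 1| ≤
      exp (k * (p + q) + k ^ 2 / n + 2 * n * (p ^ 2 + q ^ 2)) - 1 := by
  set s : ℝ := n * (p + q) with hs_def
  have hn' : (0 : ℝ) < n := by exact_mod_cast hn
  have hs : 0 < s ^ k := by positivity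
  have hkn' : (k : ℝ) / n ≤ 1 := by rw [div_le_one hn']; exact_mod_cast hkn
  have hy : 0 ≤ 2 * n * (p ^ 2 + q ^ 2) := by positivity
  have hbernoulli : 1 - (k : ℝ) ^ 2 / n ≤ (1 - k / n) ^ k :=
    calc 1 - (k : ℝ) ^ 2 / n = 1 + k * -(k / n : ℝ) := by ring
      _ ≤ (1 + -(k / n : ℝ)) ^ k :=
        one_add_mul_le_pow (by linarith [div_nonneg k.cast_nonneg hn'.le]) k
      _ = (1 - k / n) ^ k := by ring
  have hexp : 1 - 2 * n * (p ^ 2 + q ^ 2) ≤ exp (-(2 * n * (p ^ 2 + q ^ 2))) :=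
    one_sub_le_exp_neg _
  have hexp1 : exp (-(2 * n * (p ^ 2 + q ^ 2))) ≤ 1 := exp_le_one_iff.mpr (by linarith)
  have hshrink : ((n - k : ℕ) : ℝ) * (p + q) = (1 - k / n) * s := by
    rw [Nat.cast_sub hkn, hs_def]; field_simp
  apply abs_sub_one_le_exp_sub_one
  · rw [le_div_iff₀ hs]
    refine le_trans ?_ (le_prSumEq_mul_factorial_mul_exp hp hp2 hq hq2)
    rw [hshrink, mul_pow (1 - (k : ℝ) / n), ← mul_assoc]
    refine mul_le_mul_of_nonneg_right ?_ hs.le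
    have : 0 ≤ (1 - (k : ℝ) / n) ^ k := pow_nonneg (by linarith) k
    nlinarith [mul_nonneg (by linarith : 0 ≤ (1 - (k : ℝ) / n) ^ k - (1 - k ^ 2 / n))
      (exp_pos (-(2 * n * (p ^ 2 + q ^ 2)))).le, mul_nonneg (by positivity : (0 : ℝ) ≤ k ^ 2 / n)
      (by linarith : 0 ≤ 1 - exp (-(2 * n * (p ^ 2 + q ^ 2))))]
  · rw [div_le_iff₀ hs]
    refine (prSumEq_mul_factorial_mul_exp_le hp (by linarith) hq (by linarith)).trans ?_
    gcongr
    linarith [div_nonneg (sq_nonneg (k : ℝ)) hn'.le]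

lemma abs_prSumEq_mul_factorial_mul_rpow_div_sub_one_le {A B C : ℝ} (hA : 0 < A) (hAC : A ≤ C)
    (hB : 0 < B) (hBC : B ≤ C) (hn : 1 < n) (hlog : 20 * C * log n ≤ n)
    (hk : (k : ℝ) ≤ 10 * (A + B) * log n) :
    |prSumEq n (A * log n / n) (B * log n / n) k * k ! * (n : ℝ) ^ (A + B) /
        ((A + B) * log n) ^ k - 1| ≤ exp (444 * C ^ 2 * (log n ^ 2 / n)) - 1 := by
  set L := log n
  have hn' : (1 : ℝ) < n := by exact_mod_cast hn
  have hL : 0 < L := log_pos hn'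
  have hk20 : (k : ℝ) ≤ 20 * C * L := by nlinarith
  have hCn : C * L / n ≤ 1 / 20 := by rw [div_le_iff₀ (by linarith)]; linarith
  have hsmall {D : ℝ} (hD : 0 < D) (hDC : D ≤ C) : 0 ≤ D * L / n ∧ D * L / n ≤ 1 / 2 :=
    ⟨by positivity, by
      have : D * L / n ≤ C * L / n := by gcongr
      linarith⟩
  have hmass : (n : ℝ) * (A * L / n + B * L / n) = (A + B) * L := by field_simp
  have hpow : (n : ℝ) ^ (A + B) = exp (n * (A * L / n + B * L / n)) := by
    rw [rpow_def_of_pos (by linarith), hmass, mul_comm]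
  have hdev := abs_prSumEq_mul_factorial_mul_exp_div_sub_one_le (k := k) (hsmall hA hAC).1
    (hsmall hA hAC).2 (hsmall hB hBC).1 (hsmall hB hBC).2 (by positivity)
    (by exact_mod_cast hk20.trans hlog) (by omega)
  rw [← hpow, hmass] at hdev
  refine hdev.trans ?_
  gcongr
  have hk0 : (0 : ℝ) ≤ k := k.cast_nonneg
  have hAB : (A + B) * L ≤ 2 * C * L := by nlinarith
  have hCL : 0 ≤ 20 * C * L := by nlinarith
  calc (k : ℝ) * (A * L / n + B * L / n) + k ^ 2 / n + 2 * n * ((A * L / n) ^ 2 + (B * L / n) ^ 2)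
      = (k * ((A + B) * L) + k ^ 2 + 2 * (A ^ 2 + B ^ 2) * L ^ 2) / n := by
        field_simp
    _ ≤ (20 * C * L * (2 * C * L) + (20 * C * L) ^ 2 + 2 * (C ^ 2 + C ^ 2) * L ^ 2) / n := by
        gcongr
    _ = 444 * C ^ 2 * (L ^ 2 / n) := by ring

theorem poisson_approximation_of_sum
    (C : ℝ) (hC : 0 < C) (a b : ℕ → ℝ)
    (hab : ∀ᶠ n : ℕ in atTop, C⁻¹ ≤ a n ∧ a n ≤ C ∧ C⁻¹ ≤ b n ∧ b n ≤ C) :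
    ∃ ε : ℕ → ℝ, Tendsto ε atTop (nhds 0) ∧
      ∀ n k : ℕ, (k : ℝ) ≤ 10 * (a n + b n) * Real.log n →
        |prSumEq n (a n * Real.log n / n) (b n * Real.log n / n) k *
            (k.factorial : ℝ) * (n : ℝ) ^ (a n + b n) /
            ((a n + b n) * Real.log n) ^ k - 1| ≤ ε n := by
  let dev (n k : ℕ) : ℝ := |prSumEq n (a n * log n / n) (b n * log n / n) k * k ! *
    (n : ℝ) ^ (a n + b n) / ((a n + b n) * log n) ^ k - 1|
  -- `ε n` is the worst deviation over the admissible `k`, so only its limit needs proof.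
  let K (n : ℕ) : Finset ℕ := range (⌊10 * (a n + b n) * log n⌋₊ + 1)
  refine ⟨fun n => (K n).sup' nonempty_range_add_one (dev n), ?_,
    fun n k hk => le_sup' (dev n) (mem_range.mpr (Nat.lt_succ_of_le (Nat.le_floor hk)))⟩
  have hlog (m : ℕ) (c : ℝ) : Tendsto (fun n : ℕ => c * (log n ^ m / n)) atTop (nhds 0) := by
    simpa using ((tendsto_pow_log_div_mul_add_atTop 1 0 m one_ne_zero).comp
      tendsto_natCast_atTop_atTop).const_mul c
  have hbound : Tendsto (fun n : ℕ => exp (444 * C ^ 2 * (log n ^ 2 / n)) - 1) atTop (nhds 0) := by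
    simpa using ((continuous_exp.tendsto 0).comp (hlog 2 (444 * C ^ 2))).sub_const 1
  refine tendsto_of_tendsto_of_tendsto_of_le_of_le' tendsto_const_nhds hbound
    (Eventually.of_forall fun n =>
      (abs_nonneg _).trans (le_sup' (dev n) (mem_range.mpr (Nat.succ_pos _) : 0 ∈ K n))) ?_
  filter_upwards [hab, eventually_gt_atTop 1, (hlog 1 (20 * C)).eventually_le_const one_pos]
    with n ⟨ha, haC, hb, hbC⟩ hn hlogn
  have ha0 : 0 < a n := (inv_pos.mpr hC).trans_le ha
  have hb0 : 0 < b n := (inv_pos.mpr hC).trans_le hb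
  have hlogn' : 20 * C * log n ≤ n := by
    rwa [pow_one, ← mul_div_assoc, div_le_one (by positivity)] at hlogn
  have hrange : 0 ≤ 10 * (a n + b n) * log n :=
    mul_nonneg (by linarith) (log_nonneg (by exact_mod_cast hn.le))
  exact sup'_le _ _ fun k hk =>
    abs_prSumEq_mul_factorial_mul_rpow_div_sub_one_le ha0 haC hb0 hbC hn hlogn'
    ((Nat.cast_le.mpr (Nat.lt_succ_iff.mp (mem_range.mp hk))).trans (Nat.floor_le hrange))
end

section
/- Let C > 0 and K > 0 be constants and let a_n be a sequence with C^{-1} ≤ a_n ≤ C for all sufficiently large n. Set p_n = a_n (log n)/n and let X ~ Binomial(n, p_n). Then there is a sequence ε_n → 0 such that for every integer k with 0 ≤ k ≤ K log n, |Pr(X = k) · k! · n^{a_n} / (a_n log n)^k − 1| ≤ ε_n. -/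
/-! With `c = aₙ log n`, the normalised probability equals
`∏_{i<k} (1 - i/n) · (1 - c/n)^(n-k) · e^c`. Since `log (1 - x) = -x + O(x²)`, its logarithm is
`O((k + c)² / n) = O((log n)² / n)` uniformly in `k ≤ K log n`. For the finitely many small `n`
one takes for `εₙ` the largest error over `k ≤ K log n`. -/

open Real Filter

open Finset

lemma abs_log_one_sub_add_le {x : ℝ} (hx : |x| ≤ 1 / 2) : |log (1 - x) + x| ≤ 2 * x ^ 2 := by
  have h := Real.abs_log_sub_add_sum_range_le (hx.trans_lt (by norm_num)) 1
  simp only [range_one, sum_singleton, zero_add, pow_one, Nat.cast_zero, div_one] at h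
  calc |log (1 - x) + x| = |x + log (1 - x)| := by rw [add_comm]
    _ ≤ |x| ^ 2 / (1 - |x|) := h
    _ ≤ 2 * x ^ 2 := by
      rw [div_le_iff₀ (by linarith), sq_abs]
      nlinarith [sq_nonneg x]

lemma abs_log_one_sub_le {x : ℝ} (hx : |x| ≤ 1 / 2) : |log (1 - x)| ≤ 2 * |x| := by
  have h := abs_log_one_sub_add_le hx
  calc |log (1 - x)| ≤ |log (1 - x) + x| + |x| := by
        simpa using abs_sub (log (1 - x) + x) x
    _ ≤ 2 * |x| := by
      rw [← sq_abs] at h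
      nlinarith [abs_nonneg x]

lemma abs_exp_sub_one_le_exp_sub_one {t d : ℝ} (h : |t| ≤ d) : |exp t - 1| ≤ exp d - 1 := by
  rw [abs_le] at h ⊢
  constructor
  · linarith [add_one_le_exp t, add_one_le_exp d]
  · linarith [exp_le_exp.mpr h.2]

lemma binomProb_mul_factorial_div_pow {n k : ℕ} (hk : k ≤ n) {c : ℝ} (hc : c ≠ 0) :
    binomProb n (c / n) k * k.factorial / c ^ k =
      (∏ i ∈ range k, (1 - (i : ℝ) / n)) * (1 - c / n) ^ (n - k) := by
  rcases Nat.eq_zero_or_pos n with rfl | hn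
  · simp_all [binomProb]
  have hn : (n : ℝ) ≠ 0 := by positivity
  have hdesc : (n.choose k : ℝ) * k.factorial = ∏ i ∈ range k, ((n : ℝ) - i) := by
    rw [← Nat.cast_mul, mul_comm, ← Nat.descFactorial_eq_factorial_mul_choose,
      Nat.descFactorial_eq_prod_range, Nat.cast_prod]
    exact prod_congr rfl fun i hi => Nat.cast_sub ((mem_range.mp hi).le.trans hk)
  have hprod :
      ∏ i ∈ range k, (1 - (i : ℝ) / n) = (∏ i ∈ range k, ((n : ℝ) - i)) / n ^ k := by
    rw [← card_range k, ← prod_const, card_range, ← prod_div_distrib]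
    exact prod_congr rfl fun i _ => by field_simp
  rw [binomProb, hprod, ← hdesc, div_pow]
  field_simp

lemma abs_sum_log_one_sub_div_le {n k : ℕ} (hk : (k : ℝ) ≤ n / 2) :
    |∑ i ∈ range k, log (1 - (i : ℝ) / n)| ≤ 2 * k ^ 2 / n := by
  calc |∑ i ∈ range k, log (1 - (i : ℝ) / n)|
      ≤ ∑ _i ∈ range k, 2 * ((k : ℝ) / n) := by
        refine (abs_sum_le_sum_abs _ _).trans (sum_le_sum fun i hi => ?_)
        have hik : (i : ℝ) ≤ k := by exact_mod_cast (mem_range.mp hi).le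
        have hx : |(i : ℝ) / n| ≤ k / n := by
          rw [abs_of_nonneg (by positivity)]; gcongr
        refine (abs_log_one_sub_le (hx.trans ?_)).trans (by gcongr)
        rcases (Nat.cast_nonneg n : (0 : ℝ) ≤ n).eq_or_lt with hn | hn
        · simp [← hn]
        · rw [div_le_iff₀ hn]; linarith
    _ = 2 * k ^ 2 / n := by rw [sum_const, card_range, nsmul_eq_mul]; ring

lemma abs_log_prod_one_sub_mul_pow_add_le {n k : ℕ} {c : ℝ} (hc : 0 < c)
    (hk : (k : ℝ) ≤ n / 2) (hcn : c ≤ n / 2) :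
    |log ((∏ i ∈ range k, (1 - (i : ℝ) / n)) * (1 - c / n) ^ (n - k)) + c| ≤
      2 * (k + c) ^ 2 / n := by
  have hn : (0 : ℝ) < n := by linarith
  have hkn : k ≤ n := by exact_mod_cast (hk.trans (by linarith) : (k : ℝ) ≤ n)
  have hp : |c / n| ≤ 1 / 2 := by
    rw [abs_of_pos (by positivity), div_le_iff₀ hn]; linarith
  have hfac : ∀ i ∈ range k, 0 < 1 - (i : ℝ) / n := fun i hi => by
    have : (i : ℝ) < k := by exact_mod_cast mem_range.mp hi
    exact sub_pos.2 ((div_lt_one hn).2 (by linarith))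
  have hp_pos : 0 < 1 - c / n := sub_pos.2 ((div_lt_one hn).2 (by linarith))
  set S := ∑ i ∈ range k, log (1 - (i : ℝ) / n)
  set u := log (1 - c / n)
  have hlog : log ((∏ i ∈ range k, (1 - (i : ℝ) / n)) * (1 - c / n) ^ (n - k)) + c =
      S + n * (u + c / n) - k * u := by
    rw [log_mul (prod_pos hfac).ne' (pow_pos hp_pos _).ne',
      log_prod fun i hi => (hfac i hi).ne', log_pow, Nat.cast_sub hkn, mul_add,
      mul_div_cancel₀ c hn.ne']
    ring
  have hS := abs_sum_log_one_sub_div_le hk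
  have hu := abs_log_one_sub_add_le hp
  have hu' := abs_log_one_sub_le hp
  calc _ = |S + n * (u + c / n) - k * u| := by rw [hlog]
    _ ≤ |S| + |n * (u + c / n)| + |k * u| := by
        refine (abs_sub _ _).trans ?_
        gcongr
        exact abs_add_le _ _
    _ = |S| + n * |u + c / n| + k * |u| := by simp only [abs_mul, Nat.abs_cast]
    _ ≤ 2 * k ^ 2 / n + n * (2 * (c / n) ^ 2) + k * (2 * |c / n|) := by gcongr
    _ ≤ 2 * (k + c) ^ 2 / n := by
        rw [abs_of_pos (by positivity)]
        field_simp
        nlinarith [Nat.cast_nonneg (α := ℝ) k]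

theorem abs_binomProb_mul_factorial_mul_exp_div_pow_sub_one_le {n k : ℕ} {c : ℝ} (hc : 0 < c)
    (hk : (k : ℝ) ≤ n / 2) (hcn : c ≤ n / 2) :
    |binomProb n (c / n) k * k.factorial * exp c / c ^ k - 1| ≤
      exp (2 * (k + c) ^ 2 / n) - 1 := by
  have hn : (0 : ℝ) < n := by linarith
  have hkn : k ≤ n := by exact_mod_cast (hk.trans (by linarith) : (k : ℝ) ≤ n)
  set R := (∏ i ∈ range k, (1 - (i : ℝ) / n)) * (1 - c / n) ^ (n - k)
  have hR : 0 < R := by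
    refine mul_pos (prod_pos fun i hi => ?_)
      (pow_pos (sub_pos.2 ((div_lt_one hn).2 (by linarith))) _)
    have : (i : ℝ) < k := by exact_mod_cast mem_range.mp hi
    exact sub_pos.2 ((div_lt_one hn).2 (by linarith))
  have hratio : binomProb n (c / n) k * k.factorial * exp c / c ^ k = exp (log R + c) := by
    rw [mul_div_right_comm, binomProb_mul_factorial_div_pow hkn hc.ne', exp_add, exp_log hR]
  rw [hratio]
  exact abs_exp_sub_one_le_exp_sub_one (abs_log_prod_one_sub_mul_pow_add_le hc hk hcn)

lemma eventually_mul_log_le_half {M : ℝ} (hM : 0 < M) :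
    ∀ᶠ n : ℕ in atTop, M * log n ≤ n / 2 := by
  have hbound := isLittleO_log_id_atTop.bound (by positivity : 0 < 1 / (2 * M))
  filter_upwards [tendsto_natCast_atTop_atTop.eventually hbound] with n hn
  rw [norm_eq_abs, norm_eq_abs, id, Nat.abs_cast] at hn
  calc M * log n ≤ M * (1 / (2 * M) * n) := by gcongr; exact (le_abs_self _).trans hn
    _ = n / 2 := by field_simp

lemma exists_tendsto_zero_forall_abs_le {e : ℕ → ℕ → ℝ} {m : ℕ → ℕ} {δ : ℕ → ℝ}
    (hδ : Tendsto δ atTop (nhds 0)) (h : ∀ᶠ n in atTop, ∀ k ≤ m n, |e n k| ≤ δ n) :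
    ∃ ε : ℕ → ℝ, Tendsto ε atTop (nhds 0) ∧ ∀ n, ∀ k ≤ m n, |e n k| ≤ ε n := by
  set ε := fun n => (range (m n + 1)).sup' nonempty_range_add_one fun k => |e n k|
  have hε : ∀ n, ∀ k ≤ m n, |e n k| ≤ ε n := fun n k hk =>
    le_sup' (fun k => |e n k|) (mem_range_succ_iff.mpr hk)
  refine ⟨ε, tendsto_of_tendsto_of_tendsto_of_le_of_le' tendsto_const_nhds hδ ?_ ?_, hε⟩
  · exact Eventually.of_forall fun n => (abs_nonneg _).trans (hε n 0 (Nat.zero_le _))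
  · filter_upwards [h] with n hn
    exact sup'_le _ _ fun k hk => hn k (mem_range_succ_iff.mp hk)

theorem poisson_approximation_of_binomial
    (C K : ℝ) (hC : 0 < C) (hK : 0 < K) (a : ℕ → ℝ)
    (ha : ∀ᶠ n : ℕ in atTop, C⁻¹ ≤ a n ∧ a n ≤ C) :
    ∃ ε : ℕ → ℝ, Tendsto ε atTop (nhds 0) ∧
      ∀ n k : ℕ, (k : ℝ) ≤ K * Real.log n →
        |binomProb n (a n * Real.log n / n) k *
            (k.factorial : ℝ) * (n : ℝ) ^ (a n) /
            (a n * Real.log n) ^ k - 1| ≤ ε n := by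
  set δ : ℕ → ℝ := fun n => exp (2 * (K + C) ^ 2 * (log n ^ 2 / n)) - 1
  have hδ : Tendsto δ atTop (nhds 0) := by
    have h : Tendsto (fun n : ℕ => 2 * (K + C) ^ 2 * (log n ^ 2 / n)) atTop (nhds 0) := by
      simpa [Function.comp_def] using ((tendsto_pow_log_div_mul_add_atTop 1 0 2 one_ne_zero).comp
        tendsto_natCast_atTop_atTop).const_mul (2 * (K + C) ^ 2)
    simpa [δ] using ((continuous_exp.tendsto 0).comp h).sub_const 1
  have hbound : ∀ᶠ n : ℕ in atTop, ∀ k ≤ ⌊K * log n⌋₊,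
      |binomProb n (a n * log n / n) k * k.factorial * (n : ℝ) ^ (a n) / (a n * log n) ^ k - 1|
        ≤ δ n := by
    filter_upwards [ha, eventually_gt_atTop 1, eventually_mul_log_le_half hK,
      eventually_mul_log_le_half hC] with n ⟨hCa, haC⟩ hn1 hKn hCn k hk
    have hL : 0 < log n := log_pos (by exact_mod_cast hn1)
    have ha0 : 0 < a n := (inv_pos.mpr hC).trans_le hCa
    have hkK : (k : ℝ) ≤ K * log n := (Nat.cast_le.mpr hk).trans (Nat.floor_le (by positivity))
    have haL : a n * log n ≤ C * log n := mul_le_mul_of_nonneg_right haC hL.le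
    have hsum : (k : ℝ) + a n * log n ≤ (K + C) * log n := by linarith
    rw [rpow_def_of_pos (by positivity), mul_comm (log n)]
    calc _ ≤ exp (2 * (k + a n * log n) ^ 2 / n) - 1 :=
          abs_binomProb_mul_factorial_mul_exp_div_pow_sub_one_le (by positivity)
            (hkK.trans hKn) (haL.trans hCn)
      _ ≤ exp (2 * ((K + C) * log n) ^ 2 / n) - 1 := by gcongr
      _ = δ n := by
          simp only [δ]
          congr 2
          ring
  obtain ⟨ε, hε, hle⟩ := exists_tendsto_zero_forall_abs_le hδ hbound
  exact ⟨ε, hε, fun n k hk => hle n k (Nat.le_floor hk)⟩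
end

section
/- Let C > 0 be a constant and let q_n be a sequence with q_n ≤ 2/3 and n q_n / log^3 n → ∞. Let Y ~ Binomial(n, q_n), let σ_n = √(q_n(1−q_n)), and let φ(x) = (2π)^{-1/2} e^{-x^2/2}. Then there is a sequence ε_n → 0 such that for every integer k with |k − n q_n| ≤ C √(n log n) σ_n, |Pr(Y = k) · √n σ_n / φ((k − n q_n)/(√n σ_n)) − 1| ≤ ε_n. -/
open Real Filter

/-! Write `k = nq·u` and `n - k = n(1-q)·v`. Stirling's formula with Robbins' bound
`0 ≤ log (stirlingSeq j / √π) ≤ 1 / (12 j)` turns `log (Pr(Y = k) √n σ / φ(x))` into the exact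
sum of three terms: a Stirling remainder `O(1/(nq))`, the term `-(log u + log v)/2 = O(|u - 1|)`, and
`-(nq·h(u) + n(1-q)·h(v))` with `h(u) = u log u - (u - 1) - (u - 1)²/2 = O(|u - 1|³)`; the quadratic
part of the relative entropy `k log u + (n - k) log v` is exactly `x²/2`, which cancels the Gaussian
exponent. In the window, `|u - 1| ≤ C √(log n / (nq))`, so all three errors are bounded by
powers of `log³ n / (nq) → 0`. The finitely many `n` before this estimate applies are covered by
the crude bound `∑_{j ≤ n} |gaussRatio n q j - 1| + 1`. -/

open Topology Stirling

namespace Stirling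

theorem log_stirlingSeq_le_log_sqrt_pi_add {n : ℕ} (hn : n ≠ 0) :
    log (stirlingSeq n) ≤ log √π + 1 / (12 * n) := by
  obtain ⟨j, rfl⟩ := Nat.exists_eq_succ_of_ne_zero hn
  -- by Robbins' bound, `log (stirlingSeq j) - 1 / (12 j)` increases to its limit `log √π`
  set g : ℕ → ℝ := fun j ↦ log (stirlingSeq (j + 1)) - 1 / (12 * (j + 1 : ℕ))
  have hg_mono : Monotone g := by
    refine monotone_nat_of_le_succ fun j ↦ ?_
    have h := log_stirlingSeq_sdiff_le (j + 1)
    have hsplit : (1 : ℝ) / (12 * (j + 1 : ℕ) * ((j + 1 : ℕ) + 1)) =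
        1 / (12 * (j + 1 : ℕ)) - 1 / (12 * (j + 1 + 1 : ℕ)) := by
      push_cast; field_simp; ring
    simp only [g]
    linarith
  have hg_lim : Tendsto g atTop (𝓝 (log √π - 0)) := by
    refine ((continuousAt_log (by positivity)).tendsto.comp
      (tendsto_stirlingSeq_sqrt_pi.comp (tendsto_add_atTop_nat 1))).sub ?_
    exact tendsto_const_nhds.div_atTop (Tendsto.const_mul_atTop (by norm_num)
      (tendsto_natCast_atTop_atTop.comp (tendsto_add_atTop_nat 1)))
  have := hg_mono.ge_of_tendsto hg_lim j
  simp only [g, sub_zero] at this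
  linarith

theorem log_sqrt_pi_le_log_stirlingSeq {n : ℕ} (hn : n ≠ 0) : log √π ≤ log (stirlingSeq n) :=
  log_le_log (by positivity) (sqrt_pi_le_stirlingSeq hn)

theorem abs_log_stirlingSeq_add_sub_le {k m : ℕ} (hk : k ≠ 0) (hm : m ≠ 0) :
    |log (stirlingSeq (k + m)) - log (stirlingSeq k) - log (stirlingSeq m) + log √π| ≤
      1 / (12 * k) + 1 / (12 * m) := by
  have hkm : k + m ≠ 0 := by omega
  have hk' : (1 : ℝ) / (12 * (k + m : ℕ)) ≤ 1 / (12 * k) := by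
    gcongr
    exact Nat.le_add_right k m
  have : (0 : ℝ) ≤ 1 / (12 * m) := by positivity
  rw [abs_le]
  constructor
  · linarith [log_sqrt_pi_le_log_stirlingSeq hkm, log_stirlingSeq_le_log_sqrt_pi_add hk,
      log_stirlingSeq_le_log_sqrt_pi_add hm]
  · linarith [log_stirlingSeq_le_log_sqrt_pi_add hkm, log_sqrt_pi_le_log_stirlingSeq hk,
      log_sqrt_pi_le_log_stirlingSeq hm]

theorem log_factorial_eq_log_stirlingSeq_add {n : ℕ} (hn : n ≠ 0) :
    log (n.factorial : ℝ) = log (stirlingSeq n) + log (2 * n) / 2 + n * log n - n := by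
  have hn' : (n : ℝ) ≠ 0 := by exact_mod_cast hn
  rw [log_stirlingSeq_formula, log_div hn' (exp_ne_zero 1), log_exp]
  ring

end Stirling

theorem abs_log_le_two_mul_abs_sub_one {u : ℝ} (hu : |u - 1| ≤ 1 / 2) :
    |log u| ≤ 2 * |u - 1| := by
  have h := abs_log_sub_add_sum_range_le (x := 1 - u) (by rw [abs_sub_comm]; linarith) 0
  rw [abs_sub_comm] at h
  simp only [Finset.range_zero, Finset.sum_empty, zero_add, sub_sub_cancel, pow_one] at h
  calc |log u| ≤ |u - 1| / (1 - |u - 1|) := h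
    _ ≤ 2 * |u - 1| := by
      rw [div_le_iff₀ (by linarith)]
      nlinarith [abs_nonneg (u - 1)]

theorem abs_mul_log_sub_le {u : ℝ} (hu : |u - 1| ≤ 1 / 2) :
    |u * log u - (u - 1) - (u - 1) ^ 2 / 2| ≤ 4 * |u - 1| ^ 3 := by
  have h := abs_log_sub_add_sum_range_le (x := 1 - u) (by rw [abs_sub_comm]; linarith) 2
  norm_num [Finset.sum_range_succ, abs_sub_comm 1 u] at h
  set e := log u - (u - 1) + (u - 1) ^ 2 / 2 with he
  have he_le : |e| ≤ 2 * |u - 1| ^ 3 := by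
    calc |e| = |1 - u + (1 - u) ^ 2 / 2 + log u| := by congr 1; ring
      _ ≤ |u - 1| ^ 3 / (1 - |u - 1|) := h
      _ ≤ 2 * |u - 1| ^ 3 := by
          rw [div_le_iff₀ (by linarith)]
          nlinarith [pow_nonneg (abs_nonneg (u - 1)) 3, abs_nonneg (u - 1)]
  have hid : u * log u - (u - 1) - (u - 1) ^ 2 / 2 = -(u - 1) ^ 3 / 2 + u * e := by
    rw [he]; ring
  have hu_le : |u| ≤ 3 / 2 := by
    rw [abs_le] at hu ⊢; constructor <;> linarith
  rw [hid]
  calc |-(u - 1) ^ 3 / 2 + u * e| ≤ |u - 1| ^ 3 / 2 + |u| * |e| := by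
        grw [abs_add_le, abs_mul, abs_div, abs_neg, abs_pow, abs_two]
    _ ≤ |u - 1| ^ 3 / 2 + 3 / 2 * (2 * |u - 1| ^ 3) := by gcongr
    _ ≤ 4 * |u - 1| ^ 3 := by nlinarith [pow_nonneg (abs_nonneg (u - 1)) 3]

theorem abs_sub_one_le_of_mul_add_mul_eq_zero {x y u v : ℝ} (hx : 0 < x) (hxy : x ≤ 2 * y)
    (hlin : x * (u - 1) + y * (v - 1) = 0) : y * |v - 1| = x * |u - 1| ∧ |v - 1| ≤ 2 * |u - 1| := by
  have hy : 0 < y := by linarith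
  have hyv : y * |v - 1| = x * |u - 1| := by
    rw [← abs_of_pos hy, ← abs_of_pos hx, ← abs_mul, ← abs_mul,
      show y * (v - 1) = -(x * (u - 1)) by linarith, abs_neg]
  refine ⟨hyv, le_of_mul_le_mul_left ?_ hy⟩
  nlinarith [abs_nonneg (u - 1)]

theorem abs_mul_add_mul_cubic_le {x y u v δ : ℝ} (hx : 0 < x) (hxy : x ≤ 2 * y)
    (hlin : x * (u - 1) + y * (v - 1) = 0) (hu : |u - 1| ≤ δ) (hδ : δ ≤ 1 / 4) :
    |x * (u * log u - (u - 1) - (u - 1) ^ 2 / 2) + y * (v * log v - (v - 1) - (v - 1) ^ 2 / 2)|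
      ≤ 20 * x * δ ^ 3 := by
  have hy : 0 < y := by linarith
  obtain ⟨hyv, hv⟩ := abs_sub_one_le_of_mul_add_mul_eq_zero hx hxy hlin
  have hδ0 : 0 ≤ δ := (abs_nonneg _).trans hu
  have hv' : |v - 1| ≤ 2 * δ := by linarith
  have hyv3 : y * |v - 1| ^ 3 ≤ 4 * x * δ ^ 3 := by
    calc y * |v - 1| ^ 3 = x * |u - 1| * |v - 1| ^ 2 := by rw [← hyv]; ring
      _ ≤ x * δ * (2 * δ) ^ 2 := by gcongr
      _ = 4 * x * δ ^ 3 := by ring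
  have hu3 : |u - 1| ^ 3 ≤ δ ^ 3 := by gcongr
  grw [abs_add_le, abs_mul x, abs_mul y, abs_of_pos hx, abs_of_pos hy,
    abs_mul_log_sub_le (hu.trans (by linarith)), abs_mul_log_sub_le (hv'.trans (by linarith))]
  nlinarith

theorem abs_exp_sub_one_le_exp_abs_sub_one (y : ℝ) : |exp y - 1| ≤ exp |y| - 1 := by
  rcases le_total 0 y with hy | hy
  · rw [abs_of_nonneg hy, abs_of_nonneg (by linarith [add_one_le_exp y])]
  · have h1 : exp y ≤ 1 := exp_le_one_iff.2 hy
    have h2 : 1 ≤ exp (-y) := one_le_exp_iff.2 (by linarith)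
    rw [abs_of_nonpos hy, abs_of_nonpos (by linarith)]
    have : exp y * exp (-y) = 1 := by rw [← exp_add, add_neg_cancel, exp_zero]
    nlinarith

/-- `Pr(Y = k) / (φ(x) / (√n σ))` for `Y ~ Binomial(n, q)`, `σ = √(q(1-q))`,
`x = (k - nq) / (√n σ)`. -/
noncomputable def gaussRatio (n : ℕ) (q : ℝ) (k : ℕ) : ℝ :=
  binomProb n q k * (√n * √(q * (1 - q))) /
    ((√(2 * π))⁻¹ * exp (-(((k : ℝ) - n * q) / (√n * √(q * (1 - q)))) ^ 2 / 2))

theorem log_binomProb_add {q : ℝ} (hq0 : 0 < q) (hq1 : q < 1) (k m : ℕ) :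
    log (binomProb (k + m) q k) = log ((k + m).factorial : ℝ) - log (k.factorial : ℝ)
      - log (m.factorial : ℝ) + k * log q + m * log (1 - q) := by
  have : (0 : ℝ) < 1 - q := by linarith
  rw [binomProb, Nat.add_sub_cancel_left, Nat.cast_add_choose,
    log_mul (by positivity) (by positivity), log_mul (by positivity) (by positivity),
    log_div (by positivity) (by positivity), log_mul (by positivity) (by positivity),
    log_pow, log_pow]
  ring

theorem gaussRatio_eq {n : ℕ} {q : ℝ} (hn : n ≠ 0) (hq0 : 0 < q) (hq1 : q < 1) (k : ℕ) :
    gaussRatio n q k = binomProb n q k * (√n * √(q * (1 - q))) * √(2 * π)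
      * exp ((k - n * q) ^ 2 / (2 * (n * q * (1 - q)))) := by
  have : (0 : ℝ) < 1 - q := by linarith
  have : (0 : ℝ) < n := by positivity
  rw [gaussRatio, div_pow, mul_pow, sq_sqrt (by positivity), sq_sqrt (by positivity), neg_div,
    exp_neg]
  field_simp

theorem log_gaussRatio_add {k m : ℕ} {q : ℝ} (hk : k ≠ 0) (hm : m ≠ 0) (hq0 : 0 < q)
    (hq1 : q < 1) :
    let n : ℝ := k + m
    let u : ℝ := k / (n * q)
    let v : ℝ := m / (n * (1 - q))
    log (gaussRatio (k + m) q k) =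
      (log (stirlingSeq (k + m)) - log (stirlingSeq k) - log (stirlingSeq m) + log √π)
      - (log u + log v) / 2
      - (n * q * (u * log u - (u - 1) - (u - 1) ^ 2 / 2)
        + n * (1 - q) * (v * log v - (v - 1) - (v - 1) ^ 2 / 2)) := by
  intro n u v
  have hk' : (0 : ℝ) < k := by positivity
  have hm' : (0 : ℝ) < m := by positivity
  have hq1' : (0 : ℝ) < 1 - q := by linarith
  have hn : 0 < n := by positivity
  have hcast : ((k + m : ℕ) : ℝ) = n := by push_cast; rfl
  have hBpos : 0 < binomProb (k + m) q k := by
    have := Nat.choose_pos (Nat.le_add_right k m)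
    rw [binomProb]; positivity
  have hquad : n * q * (u - 1) ^ 2 / 2 + n * (1 - q) * (v - 1) ^ 2 / 2
      = (k - n * q) ^ 2 / (2 * (n * q * (1 - q))) := by
    simp only [u, v, n]; field_simp; ring
  have hlin : n * q * (u - 1) + n * (1 - q) * (v - 1) = 0 := by
    simp only [u, v, n]; field_simp; ring
  have hlogu : log u = log k - log n - log q := by
    rw [log_div hk'.ne' (by positivity), log_mul hn.ne' hq0.ne']; ring
  have hlogv : log v = log m - log n - log (1 - q) := by
    rw [log_div hm'.ne' (by positivity), log_mul hn.ne' hq1'.ne']; ring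
  have hnu : n * q * u = k := by simp only [u]; field_simp
  have hnv : n * (1 - q) * v = m := by simp only [v]; field_simp
  rw [gaussRatio_eq (by omega) hq0 hq1, hcast, log_mul (by positivity) (exp_ne_zero _),
    log_mul (by positivity) (by positivity), log_mul hBpos.ne' (by positivity), log_exp,
    log_mul (by positivity) (by positivity), log_sqrt (by positivity), log_sqrt (by positivity),
    log_sqrt (by positivity), log_sqrt pi_pos.le,
    log_binomProb_add hq0 hq1, log_factorial_eq_log_stirlingSeq_add (by omega : k + m ≠ 0),
    log_factorial_eq_log_stirlingSeq_add hk, log_factorial_eq_log_stirlingSeq_add hm, hcast,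
    ← hquad, log_mul two_ne_zero hk'.ne', log_mul two_ne_zero hm'.ne',
    log_mul two_ne_zero pi_pos.ne', log_mul hq0.ne' hq1'.ne']
  have hndef : n = k + m := rfl
  clear_value u v n
  rw [log_mul two_ne_zero hn.ne']
  linear_combination log u * hnu + log v * hnv - hlin + (k + 1 / 2 : ℝ) * hlogu
    + (m + 1 / 2 : ℝ) * hlogv + (log n - 1) * hndef

theorem abs_log_gaussRatio_add_le {k m : ℕ} {q δ : ℝ} (hq0 : 0 < q) (hq : q ≤ 2 / 3)
    (hδ : δ ≤ 1 / 4) (hk : |(k : ℝ) - (k + m) * q| ≤ δ * ((k + m) * q)) (hkm : k + m ≠ 0) :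
    |log (gaussRatio (k + m) q k)| ≤ 1 / ((k + m) * q) + 3 * δ + 20 * ((k + m) * q) * δ ^ 3 := by
  set N : ℝ := k + m with hN
  set x := N * q with hx
  have hq1 : 0 < 1 - q := by linarith
  have hN0 : 0 < N := by rw [hN]; exact_mod_cast Nat.pos_of_ne_zero hkm
  have hx0 : 0 < x := by positivity
  obtain ⟨hk_lo, hk_hi⟩ := abs_le.1 hk
  have hk_ge : 3 * x / 4 ≤ k := by nlinarith
  have hm_ge : x / 4 ≤ m := by nlinarith
  have hk0 : k ≠ 0 := by rintro rfl; simp at hk_ge; linarith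
  have hm0 : m ≠ 0 := by rintro rfl; simp at hm_ge; linarith
  set u := (k : ℝ) / x
  set v := (m : ℝ) / (N * (1 - q))
  have hu : |u - 1| ≤ δ := by
    rw [div_sub_one hx0.ne', abs_div, abs_of_pos hx0, div_le_iff₀ hx0]; exact hk
  have hxy : x ≤ 2 * (N * (1 - q)) := by nlinarith
  have hlin : x * (u - 1) + N * (1 - q) * (v - 1) = 0 := by
    simp only [u, v, hx, hN]; field_simp; ring
  have hv := (abs_sub_one_le_of_mul_add_mul_eq_zero hx0 hxy hlin).2
  have hR : 1 / (12 * (k : ℝ)) + 1 / (12 * m) ≤ 1 / x := by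
    calc 1 / (12 * (k : ℝ)) + 1 / (12 * m) ≤ 1 / (9 * x) + 1 / (3 * x) := by
          gcongr 1 / ?_ + 1 / ?_ <;> linarith
      _ ≤ 1 / x := by field_simp; linarith
  have hB : |(log u + log v) / 2| ≤ 3 * δ := by
    have := abs_log_le_two_mul_abs_sub_one (hu.trans (by linarith))
    have := abs_log_le_two_mul_abs_sub_one (hv.trans (by linarith))
    rw [abs_div, abs_two]
    linarith [abs_add_le (log u) (log v)]
  rw [log_gaussRatio_add hk0 hm0 hq0 (by linarith), ← hN, ← hx]
  grw [abs_sub, abs_sub, Stirling.abs_log_stirlingSeq_add_sub_le hk0 hm0, hB,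
    abs_mul_add_mul_cubic_le hx0 hxy hlin hu hδ, hR]

theorem gaussRatio_add_pos {k m : ℕ} {q : ℝ} (hkm : k + m ≠ 0) (hq0 : 0 < q) (hq1 : q < 1) :
    0 < gaussRatio (k + m) q k := by
  have := Nat.choose_pos (Nat.le_add_right k m)
  have : 0 < 1 - q := by linarith
  rw [gaussRatio_eq hkm hq0 hq1, binomProb, Nat.add_sub_cancel_left]
  have : (0 : ℝ) < k + m := by exact_mod_cast Nat.pos_of_ne_zero hkm
  positivity

theorem abs_gaussRatio_sub_one_le {n k : ℕ} {q δ : ℝ} (hn : n ≠ 0) (hq0 : 0 < q)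
    (hq : q ≤ 2 / 3) (hδ : δ ≤ 1 / 4) (hk : |(k : ℝ) - n * q| ≤ δ * (n * q)) :
    |gaussRatio n q k - 1| ≤ exp (1 / (n * q) + 3 * δ + 20 * (n * q) * δ ^ 3) - 1 := by
  have hkn : k ≤ n := by
    have : δ * (n * q) ≤ 1 / 4 * (n * q) := by gcongr
    have : n * q ≤ n * (2 / 3 : ℝ) := by gcongr
    have : (k : ℝ) ≤ n := by linarith [(abs_le.1 hk).2]
    exact_mod_cast this
  obtain ⟨m, rfl⟩ := Nat.exists_eq_add_of_le hkn
  push_cast at hk ⊢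
  rw [← exp_log (gaussRatio_add_pos hn hq0 (by linarith))]
  grw [abs_exp_sub_one_le_exp_abs_sub_one, abs_log_gaussRatio_add_le hq0 hq hδ hk hn]

theorem abs_gaussRatio_sub_one_le_sum (n : ℕ) (q : ℝ) (k : ℕ) :
    |gaussRatio n q k - 1| ≤ ∑ j ∈ Finset.range (n + 1), |gaussRatio n q j - 1| + 1 := by
  rcases le_or_gt k n with hkn | hnk
  · have := Finset.single_le_sum (f := fun j ↦ |gaussRatio n q j - 1|)
      (fun _ _ ↦ abs_nonneg _) (Finset.mem_range.2 (Nat.lt_succ_of_le hkn))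
    linarith
  · have : gaussRatio n q k = 0 := by simp [gaussRatio, binomProb, Nat.choose_eq_zero_of_lt hnk]
    rw [this, zero_sub, abs_neg, abs_one, le_add_iff_nonneg_left]
    positivity

theorem abs_sub_le_mul_sqrt_log_div {n k : ℕ} {q C : ℝ} (hC : 0 ≤ C) (hn : n ≠ 0) (hq0 : 0 < q)
    (hk : |(k : ℝ) - n * q| ≤ C * √(n * log n) * √(q * (1 - q))) :
    |(k : ℝ) - n * q| ≤ C * √(log n / (n * q)) * (n * q) := by
  have hx : (0 : ℝ) < n * q := by positivity
  refine hk.trans ?_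
  calc C * √(n * log n) * √(q * (1 - q)) ≤ C * √(n * log n) * √q := by
        gcongr; nlinarith
    _ = C * √(log n / (n * q)) * (n * q) := by
        have : (0 : ℝ) ≤ log n := log_natCast_nonneg n
        rw [mul_assoc, mul_assoc, ← sqrt_mul' _ hq0.le,
          show n * log n * q = log n / (n * q) * (n * q) ^ 2 by field_simp,
          sqrt_mul (by positivity), sqrt_sq hx.le]

section
variable {α : Type*} {l : Filter α} {L x : α → ℝ}

theorem tendsto_pow_three_div_zero (hx : Tendsto (fun a ↦ x a / L a ^ 3) l atTop) :
    Tendsto (fun a ↦ L a ^ 3 / x a) l (𝓝 0) :=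
  hx.inv_tendsto_atTop.congr fun _ ↦ inv_div _ _

theorem tendsto_sqrt_div_zero (hL : Tendsto L l atTop)
    (hx : Tendsto (fun a ↦ x a / L a ^ 3) l atTop) :
    Tendsto (fun a ↦ √(L a / x a)) l (𝓝 0) := by
  have h := (tendsto_pow_three_div_zero hx).mul
    ((tendsto_pow_atTop two_ne_zero).comp hL).inv_tendsto_atTop
  rw [zero_mul] at h
  have h' : Tendsto (fun a ↦ L a / x a) l (𝓝 0) := by
    refine h.congr' ?_
    filter_upwards [hL.eventually_ne_atTop 0] with a ha
    simp only [Function.comp_apply, Pi.inv_apply]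
    field_simp
  simpa only [sqrt_zero, Function.comp_def] using (continuous_sqrt.tendsto 0).comp h'

theorem tendsto_one_div_add_sqrt_div_zero (C : ℝ) (hL : Tendsto L l atTop)
    (hx : Tendsto (fun a ↦ x a / L a ^ 3) l atTop) :
    Tendsto (fun a ↦ 1 / x a + 3 * (C * √(L a / x a)) + 20 * x a * (C * √(L a / x a)) ^ 3)
      l (𝓝 0) := by
  have hx_top : Tendsto x l atTop := by
    refine (hx.atTop_mul_atTop₀ ((tendsto_pow_atTop three_ne_zero).comp hL)).congr' ?_
    filter_upwards [hL.eventually_ne_atTop 0] with a ha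
    simp only [Function.comp_apply]
    field_simp
  have hcube : Tendsto (fun a ↦ x a * √(L a / x a) ^ 3) l (𝓝 0) := by
    rw [← sqrt_zero]
    refine ((continuous_sqrt.tendsto 0).comp (tendsto_pow_three_div_zero hx)).congr' ?_
    filter_upwards [hL.eventually_ge_atTop 0, hx_top.eventually_gt_atTop 0] with a hLa hxa
    simp only [Function.comp_apply]
    have : x a * √(L a / x a) ^ 3 = L a * √(L a / x a) := by
      rw [pow_succ, sq_sqrt (by positivity)]; field_simp
    rw [this, ← sqrt_sq hLa, ← sqrt_mul (sq_nonneg _), sqrt_sq hLa]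
    congr 1; ring
  have h := ((tendsto_inv_atTop_zero.comp hx_top).add
    (((tendsto_sqrt_div_zero hL hx).const_mul C).const_mul 3)).add (hcube.const_mul (20 * C ^ 3))
  simp only [mul_zero, add_zero] at h
  refine h.congr fun a ↦ ?_
  simp only [Function.comp_apply]
  ring

end

theorem local_central_limit_theorem
    (C : ℝ) (hC : 0 < C) (q : ℕ → ℝ)
    (hq : ∀ n, 0 ≤ q n ∧ q n ≤ 2 / 3)
    (hq' : Tendsto (fun n : ℕ => (n : ℝ) * q n / (Real.log n) ^ 3) atTop atTop) :
    ∃ ε : ℕ → ℝ, Tendsto ε atTop (nhds 0) ∧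
      ∀ n k : ℕ,
        |(k : ℝ) - n * q n| ≤
            C * Real.sqrt (n * Real.log n) * Real.sqrt (q n * (1 - q n)) →
        |binomProb n (q n) k * (Real.sqrt n * Real.sqrt (q n * (1 - q n))) /
            ((Real.sqrt (2 * π))⁻¹ *
              Real.exp (-(((k : ℝ) - n * q n) /
                (Real.sqrt n * Real.sqrt (q n * (1 - q n)))) ^ 2 / 2)) - 1| ≤ ε n := by
  set δ : ℕ → ℝ := fun n ↦ C * √(log n / (n * q n))
  have hlog : Tendsto (fun n : ℕ ↦ log n) atTop atTop :=
    tendsto_log_atTop.comp tendsto_natCast_atTop_atTop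
  have hgood : ∀ᶠ n in atTop, n ≠ 0 ∧ 0 < q n ∧ δ n ≤ 1 / 4 := by
    have hδ := ((tendsto_sqrt_div_zero hlog hq').const_mul C).eventually_le_const
      (show C * 0 < 1 / 4 by norm_num)
    filter_upwards [eventually_ne_atTop 0, hq'.eventually_gt_atTop 0, hδ] with n hn hpos hδn
    refine ⟨hn, (hq n).1.lt_of_ne ?_, hδn⟩
    rintro h
    simp [← h] at hpos
  refine ⟨fun n ↦ if n ≠ 0 ∧ 0 < q n ∧ δ n ≤ 1 / 4
      then exp (1 / (n * q n) + 3 * δ n + 20 * (n * q n) * δ n ^ 3) - 1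
      else ∑ j ∈ Finset.range (n + 1), |gaussRatio n (q n) j - 1| + 1, ?_, fun n k hk ↦ ?_⟩
  · have h := ((continuous_exp.tendsto 0).comp
      (tendsto_one_div_add_sqrt_div_zero C hlog hq')).sub_const 1
    rw [exp_zero, sub_self] at h
    exact h.congr' (by filter_upwards [hgood] with n hn using (if_pos hn).symm)
  · change |gaussRatio n (q n) k - 1| ≤ if _ then _ else _
    split_ifs with h
    · exact abs_gaussRatio_sub_one_le h.1 h.2.1 (hq n).2 h.2.2
        (abs_sub_le_mul_sqrt_log_div hC.le h.1 h.2.1 hk)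
    · exact abs_gaussRatio_sub_one_le_sum n (q n) k
end

section
/- Let p_m be a sequence with m p_m ≤ 128 log m for all m, and let k_m be a sequence of nonnegative integers with k_m/m → 0. Let X_m ~ Binomial(m, p_m). Then for all sufficiently large m and every integer ℓ ≥ 1 with k_m + ℓ ≤ m, Pr(X_m = k_m + ℓ) ≤ Pr(X_m = k_m) · (m p_m / ℓ)^ℓ · e^{2ℓ}. -/
open Real Filter

/-!
Going from `k` to `k + ℓ` successes multiplies `binom(m, ·)` by at most `m ^ ℓ / ℓ!` and the
probability weight by `(p / (1 - p)) ^ ℓ`. Stirling's crude bound `ℓ ^ ℓ ≤ ℓ! e ^ ℓ` turns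
`m ^ ℓ / ℓ!` into `(m / ℓ) ^ ℓ e ^ ℓ`, and since `m p ≤ 128 log m` forces `p → 0`, eventually
`1 - p ≥ e⁻¹`, so `(1 - p) ^ (-ℓ) ≤ e ^ ℓ`.
-/

open scoped Nat

theorem Nat.choose_add_mul_factorial_le (m k ℓ : ℕ) :
    m.choose (k + ℓ) * ℓ ! ≤ m.choose k * m ^ ℓ := by
  induction ℓ with
  | zero => simp
  | succ ℓ ih =>
    have step : m.choose (k + ℓ + 1) * (ℓ + 1) ≤ m.choose (k + ℓ) * m :=
      calc m.choose (k + ℓ + 1) * (ℓ + 1) ≤ m.choose (k + ℓ + 1) * (k + ℓ + 1) :=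
            Nat.mul_le_mul_left _ (by omega)
        _ = m.choose (k + ℓ) * (m - (k + ℓ)) := Nat.choose_succ_right_eq m (k + ℓ)
        _ ≤ m.choose (k + ℓ) * m := Nat.mul_le_mul_left _ (Nat.sub_le _ _)
    calc m.choose (k + (ℓ + 1)) * (ℓ + 1)!
        = m.choose (k + ℓ + 1) * (ℓ + 1) * ℓ ! := by rw [Nat.factorial_succ]; ring_nf
      _ ≤ m.choose (k + ℓ) * m * ℓ ! := Nat.mul_le_mul_right _ step
      _ = m.choose (k + ℓ) * ℓ ! * m := by ring
      _ ≤ m.choose k * m ^ ℓ * m := Nat.mul_le_mul_right _ ih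
      _ = m.choose k * m ^ (ℓ + 1) := by ring

theorem Real.pow_self_le_factorial_mul_exp (ℓ : ℕ) : (ℓ : ℝ) ^ ℓ ≤ ℓ ! * exp ℓ := by
  have h := pow_div_factorial_le_exp (x := ℓ) (Nat.cast_nonneg ℓ) ℓ
  rwa [div_le_iff₀ (by positivity), mul_comm] at h

theorem one_le_pow_mul_exp_of_exp_neg_one_le {q : ℝ} (hq : exp (-1) ≤ q) (ℓ : ℕ) :
    1 ≤ q ^ ℓ * exp ℓ := by
  have hq_exp : 1 ≤ q * exp 1 := by
    simpa [← exp_add] using mul_le_mul_of_nonneg_right hq (exp_pos 1).le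
  simpa [mul_pow, ← exp_nat_mul] using one_le_pow₀ (n := ℓ) hq_exp

theorem binomProb_add_mul_factorial_le {m k ℓ : ℕ} {p : ℝ} (hp₀ : 0 ≤ p) (hp₁ : p ≤ 1)
    (hkℓ : k + ℓ ≤ m) :
    binomProb m p (k + ℓ) * ℓ ! * (1 - p) ^ ℓ ≤ binomProb m p k * (m * p) ^ ℓ := by
  have hchoose : (m.choose (k + ℓ) : ℝ) * ℓ ! ≤ m.choose k * (m : ℝ) ^ ℓ := by
    exact_mod_cast Nat.choose_add_mul_factorial_le m k ℓ
  have hsub : m - k = m - (k + ℓ) + ℓ := by omega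
  have hweight : 0 ≤ p ^ (k + ℓ) * (1 - p) ^ (m - k) := by
    have : 0 ≤ 1 - p := by linarith
    positivity
  calc binomProb m p (k + ℓ) * ℓ ! * (1 - p) ^ ℓ
      = (m.choose (k + ℓ) : ℝ) * ℓ ! * (p ^ (k + ℓ) * (1 - p) ^ (m - k)) := by
        rw [binomProb, hsub, pow_add (1 - p)]; ring
    _ ≤ m.choose k * (m : ℝ) ^ ℓ * (p ^ (k + ℓ) * (1 - p) ^ (m - k)) :=
        mul_le_mul_of_nonneg_right hchoose hweight
    _ = binomProb m p k * (m * p) ^ ℓ := by rw [binomProb, pow_add, mul_pow]; ring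

theorem binomProb_add_le {m k ℓ : ℕ} {p : ℝ} (hp₀ : 0 ≤ p) (hp : exp (-1) ≤ 1 - p)
    (hkℓ : k + ℓ ≤ m) :
    binomProb m p (k + ℓ) ≤ binomProb m p k * (m * p / ℓ) ^ ℓ * exp (2 * ℓ) := by
  have hp₁ : p ≤ 1 := by linarith [exp_pos (-1)]
  have hprob : 0 ≤ binomProb m p (k + ℓ) := by
    have : 0 ≤ 1 - p := by linarith
    unfold binomProb; positivity
  have hℓ : (0 : ℝ) < ℓ ^ ℓ := by
    rcases Nat.eq_zero_or_pos ℓ with rfl | h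
    · simp
    · positivity
  have key : binomProb m p (k + ℓ) * ℓ ^ ℓ ≤ binomProb m p k * (m * p) ^ ℓ * exp (2 * ℓ) :=
    calc binomProb m p (k + ℓ) * ℓ ^ ℓ
        ≤ binomProb m p (k + ℓ) * (ℓ ! * exp ℓ) * ((1 - p) ^ ℓ * exp ℓ) := by
          rw [← mul_one (binomProb m p (k + ℓ) * ℓ ^ ℓ)]
          gcongr
          · exact pow_self_le_factorial_mul_exp ℓ
          · exact one_le_pow_mul_exp_of_exp_neg_one_le hp ℓ
      _ = binomProb m p (k + ℓ) * ℓ ! * (1 - p) ^ ℓ * exp (2 * ℓ) := by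
          rw [show (2 : ℝ) * ℓ = ℓ + ℓ by ring, exp_add]; ring
      _ ≤ binomProb m p k * (m * p) ^ ℓ * exp (2 * ℓ) :=
          mul_le_mul_of_nonneg_right (binomProb_add_mul_factorial_le hp₀ hp₁ hkℓ) (exp_pos _).le
  calc binomProb m p (k + ℓ) = binomProb m p (k + ℓ) * ℓ ^ ℓ / ℓ ^ ℓ := by field_simp
    _ ≤ binomProb m p k * (m * p) ^ ℓ * exp (2 * ℓ) / ℓ ^ ℓ := by gcongr
    _ = binomProb m p k * (m * p / ℓ) ^ ℓ * exp (2 * ℓ) := by rw [div_pow]; ring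

theorem eventually_le_of_natCast_mul_le_log {p : ℕ → ℝ} {C ε : ℝ} (hε : 0 < ε)
    (hp : ∀ m : ℕ, (m : ℝ) * p m ≤ C * log m) :
    ∀ᶠ m : ℕ in atTop, p m ≤ ε := by
  have hlog : (fun m : ℕ => C * log m) =o[atTop] (fun m : ℕ => (m : ℝ)) :=
    (isLittleO_log_id_atTop.comp_tendsto tendsto_natCast_atTop_atTop).const_mul_left C
  filter_upwards [hlog.bound hε, eventually_gt_atTop 0] with m hm hm₀
  have hm₀' : (0 : ℝ) < m := by exact_mod_cast hm₀
  rw [Real.norm_of_nonneg hm₀'.le] at hm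
  have : (m : ℝ) * p m ≤ ε * m := (hp m).trans ((le_abs_self _).trans hm)
  nlinarith

theorem binomial_ratio_bound_sparse_general
    (p : ℕ → ℝ) (hp : ∀ m, 0 ≤ p m ∧ p m ≤ 1)
    (hp' : ∀ m : ℕ, (m : ℝ) * p m ≤ 128 * Real.log m)
    (k : ℕ → ℕ) :
    ∀ᶠ m : ℕ in atTop, ∀ ℓ : ℕ, 1 ≤ ℓ → k m + ℓ ≤ m →
      binomProb m (p m) (k m + ℓ) ≤
        binomProb m (p m) (k m) * ((m : ℝ) * p m / (ℓ : ℝ)) ^ ℓ *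
          Real.exp (2 * ℓ) := by
  have hε : (0 : ℝ) < 1 - exp (-1) := sub_pos.2 (exp_lt_one_iff.2 (by norm_num))
  filter_upwards [eventually_le_of_natCast_mul_le_log hε hp'] with m hm ℓ _ hkℓ
  exact binomProb_add_le (hp m).1 (by linarith) hkℓ

theorem binomial_ratio_bound_sparse
    (p : ℕ → ℝ) (hp : ∀ m, 0 ≤ p m ∧ p m ≤ 1)
    (hp' : ∀ m : ℕ, (m : ℝ) * p m ≤ 128 * Real.log m)
    (k : ℕ → ℕ) (hk : Tendsto (fun m : ℕ => (k m : ℝ) / (m : ℝ)) atTop (nhds 0)) :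
    ∀ᶠ m : ℕ in atTop, ∀ ℓ : ℕ, 1 ≤ ℓ → k m + ℓ ≤ m →
      binomProb m (p m) (k m + ℓ) ≤
        binomProb m (p m) (k m) * ((m : ℝ) * p m / (ℓ : ℝ)) ^ ℓ *
          Real.exp (2 * ℓ) :=
  binomial_ratio_bound_sparse_general p hp hp' k
end
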